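/- arXiv:1905.00791 — 2 statements merged into one kernel-verified Lean document; each statement's English description precedes it below -/
import Mathlib

section
/- For every perfect bichromatic matching M on a set P of n points in the plane in convex position (and in general position), consisting of n/2 red and n/2 blue points, there exists a sequence of at most n − 2 flips transforming M into a plane perfect bichromatic matching; that is, f(M) ≤ n − 2. -/
open EuclideanGeometry Real

noncomputable section

/-- Points of the Euclidean plane. -/
abbrev Pt : Type := EuclideanSpace ℝ (Fin 2)

/-- Two closed segments `ab` and `cd` on four distinct points *cross* if their open
segments have a common point. -/
def SegCross (a b c d : Pt) : Prop :=
  a ≠ b ∧ a ≠ c ∧ a ≠ d ∧ b ≠ c ∧ b ≠ d ∧ c ≠ d ∧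
    (openSegment ℝ a b ∩ openSegment ℝ c d).Nonempty

/-- No three distinct points of `P` are collinear. -/
def GenPos (P : Set Pt) : Prop :=
  ∀ p ∈ P, ∀ q ∈ P, ∀ r ∈ P, p ≠ q → p ≠ r → q ≠ r →
    ¬ Collinear ℝ ({p, q, r} : Set Pt)

/-- `P` is in convex position: no point lies in the convex hull of the others. -/
def ConvexPos (P : Set Pt) : Prop :=
  ∀ p ∈ P, p ∉ convexHull ℝ (P \ {p})

/-- `M` is a perfect bichromatic matching between the red points `R` and the blue
points `B`: a set of (red, blue) pairs such that every red point is the red endpoint of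
exactly one edge and every blue point is the blue endpoint of exactly one edge. -/
def IsBiPM (R B : Finset Pt) (M : Set (Pt × Pt)) : Prop :=
  (∀ e ∈ M, e.1 ∈ R ∧ e.2 ∈ B) ∧
  (∀ r ∈ R, ∃! e, e ∈ M ∧ e.1 = r) ∧
  (∀ b ∈ B, ∃! e, e ∈ M ∧ e.2 = b)

/-- A bichromatic matching is plane if no two of its edges cross. -/
def BiPlane (M : Set (Pt × Pt)) : Prop :=
  ∀ e ∈ M, ∀ f ∈ M, ¬ SegCross e.1 e.2 f.1 f.2

/-- `M'` is obtained from `M` by a single bichromatic flip: two crossing edges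
`{r,b}`, `{r',b'}` are replaced by `{r,b'}`, `{r',b}`. -/
def BiFlip (M M' : Set (Pt × Pt)) : Prop :=
  ∃ r b r' b' : Pt, (r, b) ∈ M ∧ (r', b') ∈ M ∧ SegCross r b r' b' ∧
    M' = (M \ {(r, b), (r', b')}) ∪ {(r, b'), (r', b)}

/-- `M` can be transformed into a plane bichromatic matching by at most `k` flips. -/
def BiFlipsToPlane (M : Set (Pt × Pt)) (k : ℕ) : Prop :=
  ∃ (j : ℕ) (g : ℕ → Set (Pt × Pt)), j ≤ k ∧ g 0 = M ∧
    (∀ i < j, BiFlip (g i) (g (i + 1))) ∧ BiPlane (g j)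

noncomputable local instance : DecidableEq Pt := Classical.decEq _

noncomputable def sig (a b c : Pt) : ℝ :=
  (b 0 - a 0) * (c 1 - a 1) - (b 1 - a 1) * (c 0 - a 0)

lemma sig_cycle (a b c : Pt) : sig a b c = sig b c a := by simp only [sig]; ring
lemma sig_swap (a b c : Pt) : sig a b c = - sig b a c := by simp only [sig]; ring
lemma sig_self (a b : Pt) : sig a b a = 0 := by simp only [sig]; ring
lemma sig_self2 (a b : Pt) : sig a b b = 0 := by simp only [sig]; ring
lemma sig_affine (a b c d : Pt) (s r : ℝ) (h : s + r = 1) :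
    sig a b (s • c + r • d) = s * sig a b c + r * sig a b d := by
  have h1 : (s • c + r • d) 0 = s * c 0 + r * d 0 := by simp
  have h2 : (s • c + r • d) 1 = s * c 1 + r * d 1 := by simp
  simp only [sig, h1, h2]
  have : r = 1 - s := by linarith
  subst this; ring

lemma exists_affine_comb_of_sig_eq_zero (a b c : Pt) (hab : a ≠ b) (h : sig a b c = 0) :
    ∃ t : ℝ, c = a + t • (b - a) := by
  have hne : (b 0 - a 0) ≠ 0 ∨ (b 1 - a 1) ≠ 0 := by
    by_contra hc
    push_neg at hc
    apply hab
    ext i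
    fin_cases i
    · have := hc.1; simpa using by linarith
    · have := hc.2; simpa using by linarith
  rcases hne with h0 | h0
  · refine ⟨(c 0 - a 0) / (b 0 - a 0), ?_⟩
    ext i
    fin_cases i
    · show c 0 = (a + _ • (b-a)) 0
      simp; field_simp; ring
    · show c 1 = (a + _ • (b-a)) 1
      simp; field_simp
      simp only [sig] at h
      nlinarith [h]
  · refine ⟨(c 1 - a 1) / (b 1 - a 1), ?_⟩
    ext i
    fin_cases i
    · show c 0 = (a + _ • (b-a)) 0
      simp; field_simp
      simp only [sig] at h; nlinarith [h]
    · show c 1 = (a + _ • (b-a)) 1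
      simp; field_simp; ring

lemma collinear_of_sig_eq_zero (a b c : Pt) (hab : a ≠ b) (h : sig a b c = 0) :
    Collinear ℝ ({a, b, c} : Set Pt) := by
  rcases exists_affine_comb_of_sig_eq_zero a b c hab h with ⟨t, ht⟩
  rw [collinear_iff_of_mem (Set.mem_insert a {b, c})]
  refine ⟨b - a, ?_⟩
  intro p hp
  rcases hp with rfl | rfl | rfl
  · exact ⟨0, by simp⟩
  · exact ⟨1, by simp⟩
  · exact ⟨t, by rw [ht]; simp [vadd_eq_add]; abel⟩
lemma mem_openSegment_comb (c d : Pt) (s r : ℝ) (hs : 0 < s) (hr : 0 < r) (h : s + r = 1) :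
    s • c + r • d ∈ openSegment ℝ c d := ⟨s, r, hs, hr, h, rfl⟩

lemma cross_core (a b c d : Pt) (hab : a ≠ b)
    (h1 : sig a b c * sig a b d < 0) (h2 : sig c d a * sig c d b < 0) :
    (openSegment ℝ a b ∩ openSegment ℝ c d).Nonempty := by
  set A := sig a b c with hA
  set B := sig a b d with hB
  have hAB : A - B ≠ 0 := by rcases mul_neg_iff.1 h1 with ⟨h,h'⟩|⟨h,h'⟩ <;> intro hc <;> nlinarith
  set s : ℝ := A / (A - B) with hs
  have hs0 : 0 < s := by
    rcases mul_neg_iff.1 h1 with ⟨h,h'⟩|⟨h,h'⟩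
    · apply div_pos h (by linarith)
    · rw [hs, div_pos_iff]; right; constructor <;> linarith
  have hs1 : s < 1 := by
    rw [hs, div_lt_one_iff]
    rcases mul_neg_iff.1 h1 with ⟨h,h'⟩|⟨h,h'⟩
    · left; exact ⟨by linarith, by linarith⟩
    · right; right; constructor <;> linarith
  set z : Pt := (1 - s) • c + s • d with hz
  have hzseg : z ∈ openSegment ℝ c d := mem_openSegment_comb c d (1-s) s (by linarith) hs0 (by linarith)
  have hsigz : sig a b z = 0 := by
    rw [hz, sig_affine a b c d (1-s) s (by linarith)]
    rw [hs]
    field_simp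
    ring
  rcases exists_affine_comb_of_sig_eq_zero a b z hab hsigz with ⟨τ, hτ⟩
  have hτ' : z = (1 - τ) • a + τ • b := by
    rw [hτ]; ext i; simp; ring
  have hcdz : sig c d z = 0 := by
    rw [hz, sig_affine c d c d (1-s) s (by linarith), sig_self, sig_self2]; ring
  have heq : (1 - τ) * sig c d a + τ * sig c d b = 0 := by
    rw [← sig_affine c d a b (1-τ) τ (by linarith), ← hτ', hcdz]
  have hτ0 : 0 < τ := by
    rcases mul_neg_iff.1 h2 with ⟨h,h'⟩|⟨h,h'⟩ <;> nlinarith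
  have hτ1 : τ < 1 := by
    rcases mul_neg_iff.1 h2 with ⟨h,h'⟩|⟨h,h'⟩ <;> nlinarith
  exact ⟨z, by rw [hτ']; exact mem_openSegment_comb a b (1-τ) τ (by linarith) hτ0 (by linarith), hzseg⟩

/-- if c and d are strictly on the same side of line ab, segments don't meet -/
lemma openSegment_disjoint_of_side (a b c d : Pt) (hab : a ≠ b)
    (h : 0 < sig a b c * sig a b d) :
    openSegment ℝ a b ∩ openSegment ℝ c d = ∅ := by
  ext z
  simp only [Set.mem_inter_iff, Set.mem_empty_iff_false, iff_false]
  rintro ⟨⟨p, q, hp, hq, hpq, hz1⟩, ⟨p', q', hp', hq', hpq', hz2⟩⟩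
  have e1 : sig a b z = 0 := by
    rw [← hz1, sig_affine a b a b p q hpq, sig_self, sig_self2]; ring
  have e2 : sig a b z = p' * sig a b c + q' * sig a b d := by
    rw [← hz2, sig_affine a b c d p' q' hpq']
  rcases mul_pos_iff.1 h with ⟨h1,h2⟩|⟨h1,h2⟩ <;> nlinarith
lemma planar_key (u1 u2 v1 v2 nu nv : ℝ) (hnu : 0 < nu) (hnv : 0 < nv)
    (hu : nu^2 = u1^2 + u2^2) (hv : nv^2 = v1^2 + v2^2)
    (hu2 : 0 ≤ u2) (hv2 : 0 ≤ v2) (hu20 : u2 = 0 → 0 < u1) (hv20 : v2 = 0 → 0 < v1)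
    (H : v1 * nu < u1 * nv) : 0 < u1 * v2 - u2 * v1 := by
  rcases eq_or_lt_of_le hv2 with hv2e | hv2p
  · exfalso
    have hv1 : 0 < v1 := hv20 hv2e.symm
    have : nv = v1 := by nlinarith [sq_nonneg (nv - v1)]
    nlinarith [sq_nonneg (nu - u1), sq_nonneg u2]
  rcases eq_or_lt_of_le hu2 with hu2e | hu2p
  · have hu1 : 0 < u1 := hu20 hu2e.symm
    have : u2 = 0 := hu2e.symm
    rw [this]
    have : 0 < u1 * v2 := mul_pos hu1 hv2p
    linarith
  have hid : (u1 * v2 - u2 * v1) * (u1 * v2 + u2 * v1)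
      = (u1 * nv - v1 * nu) * (u1 * nv + v1 * nu) := by nlinarith [hu, hv]
  have c3 : 0 < u1 * nv - v1 * nu := by linarith
  rcases le_or_gt 0 v1 with hv1 | hv1
  · have hu1 : 0 < u1 := by nlinarith [mul_nonneg hv1 (le_of_lt hnu)]
    have c1 : 0 < u1 * v2 + u2 * v1 :=
      add_pos_of_pos_of_nonneg (mul_pos hu1 hv2p) (mul_nonneg (le_of_lt hu2p) hv1)
    have c2 : 0 < u1 * nv + v1 * nu :=
      add_pos_of_pos_of_nonneg (mul_pos hu1 hnv) (mul_nonneg hv1 (le_of_lt hnu))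
    have h5 : 0 < (u1 * v2 - u2 * v1) * (u1 * v2 + u2 * v1) := by
      rw [hid]; exact mul_pos c3 c2
    rcases mul_pos_iff.1 h5 with ⟨h6, _⟩ | ⟨_, h7⟩
    · linarith
    · linarith
  · rcases le_or_gt 0 u1 with hu1 | hu1
    · have h8 := mul_neg_of_pos_of_neg hu2p hv1
      have h9 := mul_nonneg hu1 (le_of_lt hv2p)
      linarith
    · have c1 : u1 * v2 + u2 * v1 < 0 := by
        have := mul_neg_of_neg_of_pos hu1 hv2p
        have := mul_neg_of_pos_of_neg hu2p hv1
        linarith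
      have c2 : u1 * nv + v1 * nu < 0 := by
        have := mul_neg_of_neg_of_pos hu1 hnv
        have := mul_neg_of_neg_of_pos hv1 hnu
        linarith
      have h5 : (u1 * v2 - u2 * v1) * (u1 * v2 + u2 * v1) < 0 := by
        rw [hid]; exact mul_neg_of_pos_of_neg c3 c2
      rcases mul_neg_iff.1 h5 with ⟨h6, _⟩ | ⟨_, h7⟩
      · linarith
      · linarith

lemma planar_eq (u1 u2 v1 v2 nu nv : ℝ) (hnu : 0 < nu) (hnv : 0 < nv)
    (hu : nu^2 = u1^2 + u2^2) (hv : nv^2 = v1^2 + v2^2)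
    (hu2 : 0 ≤ u2) (hv2 : 0 ≤ v2) (hu20 : u2 = 0 → 0 < u1) (hv20 : v2 = 0 → 0 < v1)
    (H : v1 * nu = u1 * nv) : u1 * v2 - u2 * v1 = 0 := by
  have h2 : u2^2 * v1^2 = v2^2 * u1^2 := by
    linear_combination (v1*nu + u1*nv) * H - v1^2 * hu + u1^2 * hv
  rcases eq_or_lt_of_le hu2 with hu2e | hu2p
  · have hu1 : 0 < u1 := hu20 hu2e.symm
    have hnue : nu = u1 := by nlinarith [sq_nonneg (nu - u1), sq_nonneg u2]
    have hv1nv : v1 = nv := by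
      have H' : u1 * v1 = u1 * nv := by rw [hnue] at H; linarith
      exact mul_left_cancel₀ (ne_of_gt hu1) H'
    have hv2e : v2 = 0 := by nlinarith [hv]
    rw [← hu2e, hv2e]; ring
  rcases eq_or_lt_of_le hv2 with hv2e | hv2p
  · have hv1 : 0 < v1 := hv20 hv2e.symm
    have hnve : nv = v1 := by nlinarith [sq_nonneg (nv - v1)]
    have hnuu : nu = u1 := by
      have H' : v1 * nu = v1 * u1 := by rw [hnve] at H; linarith
      have := mul_left_cancel₀ (ne_of_gt hv1) H'
      linarith
    exfalso
    nlinarith [hu]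
  · have hfac : (u2*v1 - v2*u1) * (u2*v1 + v2*u1) = 0 := by linear_combination h2
    rcases lt_trichotomy v1 0 with hv1 | hv1 | hv1
    · have hu1 : u1 < 0 := by
        rcases le_or_gt 0 u1 with h | h
        · exfalso; nlinarith [mul_nonneg h (le_of_lt hnv), mul_neg_of_neg_of_pos hv1 hnu]
        · exact h
      have hsum : u2*v1 + v2*u1 < 0 := by
        have := mul_neg_of_pos_of_neg hu2p hv1
        have := mul_neg_of_pos_of_neg hv2p hu1
        linarith
      rcases mul_eq_zero.1 hfac with h | h
      · linarith
      · linarith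
    · have : u1 = 0 := by
        have : u1 * nv = 0 := by rw [← H, hv1]; ring
        rcases mul_eq_zero.1 this with h | h
        · exact h
        · linarith
      rw [this, hv1]; ring
    · have hu1 : 0 < u1 := by
        rcases le_or_gt u1 0 with h | h
        · exfalso; nlinarith [mul_pos hv1 hnu, mul_nonpos_of_nonpos_of_nonneg h (le_of_lt hnv)]
        · exact h
      have hsum : 0 < u2*v1 + v2*u1 := by
        have := mul_pos hu2p hv1
        have := mul_pos hv2p hu1
        linarith
      rcases mul_eq_zero.1 hfac with h | h
      · linarith
      · linarith

lemma sig_ne_of_genpos {P : Set Pt} (hgp : GenPos P) {x y z : Pt}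
    (hx : x ∈ P) (hy : y ∈ P) (hz : z ∈ P) (hxy : x ≠ y) (hxz : x ≠ z) (hyz : y ≠ z) :
    sig x y z ≠ 0 :=
  fun h => hgp x hx y hy z hz hxy hxz hyz (collinear_of_sig_eq_zero x y z hxy h)

lemma dist_sq (p q : Pt) : (dist p q)^2 = (q 0 - p 0)^2 + (q 1 - p 1)^2 := by
  rw [EuclideanSpace.dist_eq, Real.sq_sqrt (by positivity), Fin.sum_univ_two]
  simp only [Real.dist_eq, sq_abs]
  ring

lemma pt_ext {p q : Pt} (h0 : p 0 = q 0) (h1 : p 1 = q 1) : p = q := by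
  ext i; fin_cases i <;> assumption

lemma mem_convexHull_triangle (x y z b : Pt) (a1 a2 a3 : ℝ)
    (h1 : 0 < a1) (h2 : 0 < a2) (h3 : 0 < a3) (hs : a1 + a2 + a3 = 1)
    (hb : b = a1 • x + a2 • y + a3 • z) : b ∈ convexHull ℝ ({x, y, z} : Set Pt) := by
  have h23 : 0 < a2 + a3 := by linarith
  set m : Pt := (a2/(a2+a3)) • y + (a3/(a2+a3)) • z with hm
  have hmseg : m ∈ segment ℝ y z :=
    ⟨a2/(a2+a3), a3/(a2+a3), by positivity, by positivity, by field_simp, rfl⟩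
  have hym : y ∈ convexHull ℝ ({x, y, z} : Set Pt) := subset_convexHull ℝ _ (by simp)
  have hzm : z ∈ convexHull ℝ ({x, y, z} : Set Pt) := subset_convexHull ℝ _ (by simp)
  have hxm : x ∈ convexHull ℝ ({x, y, z} : Set Pt) := subset_convexHull ℝ _ (by simp)
  have hmc : m ∈ convexHull ℝ ({x, y, z} : Set Pt) :=
    (convex_convexHull ℝ _).segment_subset hym hzm hmseg
  have hbseg : b ∈ segment ℝ x m := by
    refine ⟨a1, a2 + a3, le_of_lt h1, le_of_lt h23, by linarith, ?_⟩
    rw [hm, smul_add, smul_smul, smul_smul]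
    have e2 : (a2 + a3) * (a2 / (a2 + a3)) = a2 := by field_simp
    have e3 : (a2 + a3) * (a3 / (a2 + a3)) = a3 := by field_simp
    rw [e2, e3, hb]
    abel
  exact (convex_convexHull ℝ _).segment_subset hxm hmc hbseg

lemma barycentric (p x z y : Pt) (hS : sig p x z ≠ 0) :
    y = (sig y x z / sig p x z) • p + (sig p y z / sig p x z) • x
        + (sig p x y / sig p x z) • z := by
  ext i
  fin_cases i <;>
  · show y _ = ((sig y x z / sig p x z) • p + (sig p y z / sig p x z) • x
        + (sig p x y / sig p x z) • z) _
    simp only [PiLp.add_apply, PiLp.smul_apply, smul_eq_mul]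
    field_simp
    simp only [sig]
    simp only [Fin.zero_eta, Fin.mk_one]
    ring

lemma barycentric_sum (p x z y : Pt) : sig y x z + sig p y z + sig p x y = sig p x z := by
  simp only [sig]; ring

/-- The key order existence: points of a finite convex-and-general position set
can be given real keys so that key-increasing triples are positively oriented. -/
lemma exists_convex_order (P : Finset Pt) (hgp : GenPos ↑P) (hcv : ConvexPos ↑P) :
    ∃ t : Pt → ℝ, Set.InjOn t ↑P ∧
      (∀ x ∈ P, ∀ y ∈ P, ∀ z ∈ P, t x < t y → t y < t z → 0 < sig x y z) := by
  classical
  rcases P.eq_empty_or_nonempty with rfl | hne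
  · exact ⟨fun _ => 0, by simp, by simp⟩
  -- p₀ : lexicographically (y, then x) smallest point
  have hQne : (P.image (fun p => p 1)).Nonempty := hne.image _
  set y₀ := (P.image (fun p => p 1)).min' hQne with hy₀
  have hP'ne : (P.filter (fun p => p 1 = y₀)).Nonempty := by
    have := (P.image (fun p => p 1)).min'_mem hQne
    rw [Finset.mem_image] at this
    rcases this with ⟨p, hp, hpv⟩
    exact ⟨p, Finset.mem_filter.2 ⟨hp, hpv⟩⟩
  have hXne : ((P.filter (fun p => p 1 = y₀)).image (fun p => p 0)).Nonempty := hP'ne.image _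
  set x₀ := ((P.filter (fun p => p 1 = y₀)).image (fun p => p 0)).min' hXne with hx₀
  obtain ⟨p₀, hp₀f, hp₀x⟩ : ∃ p₀ ∈ P.filter (fun p => p 1 = y₀), p₀ 0 = x₀ := by
    have := ((P.filter (fun p => p 1 = y₀)).image (fun p => p 0)).min'_mem hXne
    rw [Finset.mem_image] at this
    rcases this with ⟨p, hp, hpv⟩
    exact ⟨p, hp, hpv⟩
  have hp₀P : p₀ ∈ P := (Finset.mem_filter.1 hp₀f).1
  have hp₀y : p₀ 1 = y₀ := (Finset.mem_filter.1 hp₀f).2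
  have hbase : ∀ q ∈ P, q ≠ p₀ → p₀ 1 < q 1 ∨ (p₀ 1 = q 1 ∧ p₀ 0 < q 0) := by
    intro q hq hqp
    have hy : y₀ ≤ q 1 := Finset.min'_le _ _ (Finset.mem_image_of_mem _ hq)
    rcases lt_or_eq_of_le hy with h | h
    · left; rw [hp₀y]; exact h
    · right
      have hqf : q ∈ P.filter (fun p => p 1 = y₀) := Finset.mem_filter.2 ⟨hq, h.symm⟩
      have hx : x₀ ≤ q 0 := Finset.min'_le _ _ (Finset.mem_image_of_mem _ hqf)
      rcases lt_or_eq_of_le hx with h' | h'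
      · exact ⟨by rw [hp₀y, h], by rw [hp₀x]; exact h'⟩
      · exfalso; exact hqp (pt_ext (by rw [hp₀x, h']) (by rw [hp₀y, ← h]))
  set t : Pt → ℝ := fun q => if q = p₀ then (-2) else (p₀ 0 - q 0) / dist p₀ q with ht
  -- basic data for q ≠ p₀
  have hdata : ∀ q ∈ P, q ≠ p₀ →
      0 < dist p₀ q ∧ (dist p₀ q)^2 = (q 0 - p₀ 0)^2 + (q 1 - p₀ 1)^2 ∧
      0 ≤ q 1 - p₀ 1 ∧ (q 1 - p₀ 1 = 0 → 0 < q 0 - p₀ 0) := by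
    intro q hq hqp
    refine ⟨dist_pos.2 (Ne.symm hqp), dist_sq p₀ q, ?_, ?_⟩
    · rcases hbase q hq hqp with h | ⟨h, _⟩ <;> linarith
    · intro h0
      rcases hbase q hq hqp with h | ⟨_, h⟩
      · linarith
      · linarith
  have htlb : ∀ q ∈ P, q ≠ p₀ → -1 ≤ t q := by
    intro q hq hqp
    obtain ⟨hnu, hsq, _, _⟩ := hdata q hq hqp
    have : t q = (p₀ 0 - q 0) / dist p₀ q := by simp only [ht, if_neg hqp]
    rw [this, le_div_iff₀ hnu]
    nlinarith [sq_nonneg (q 1 - p₀ 1), sq_nonneg (dist p₀ q - (q 0 - p₀ 0))]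
  have key1 : ∀ q ∈ P, q ≠ p₀ → ∀ q' ∈ P, q' ≠ p₀ → t q < t q' → 0 < sig p₀ q q' := by
    intro q hq hqp q' hq' hq'p hlt
    obtain ⟨hnu, hsqu, hu2, hu20⟩ := hdata q hq hqp
    obtain ⟨hnv, hsqv, hv2, hv20⟩ := hdata q' hq' hq'p
    have htq : t q = (p₀ 0 - q 0) / dist p₀ q := by simp only [ht, if_neg hqp]
    have htq' : t q' = (p₀ 0 - q' 0) / dist p₀ q' := by simp only [ht, if_neg hq'p]
    rw [htq, htq', div_lt_div_iff₀ hnu hnv] at hlt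
    have := planar_key (q 0 - p₀ 0) (q 1 - p₀ 1) (q' 0 - p₀ 0) (q' 1 - p₀ 1)
      (dist p₀ q) (dist p₀ q') hnu hnv hsqu hsqv hu2 hv2 hu20 hv20 (by nlinarith)
    simp only [sig]
    linarith [this]
  have key2 : ∀ q ∈ P, q ≠ p₀ → ∀ q' ∈ P, q' ≠ p₀ → t q = t q' → q = q' := by
    intro q hq hqp q' hq' hq'p heq
    by_contra hne'
    obtain ⟨hnu, hsqu, hu2, hu20⟩ := hdata q hq hqp
    obtain ⟨hnv, hsqv, hv2, hv20⟩ := hdata q' hq' hq'p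
    have htq : t q = (p₀ 0 - q 0) / dist p₀ q := by simp only [ht, if_neg hqp]
    have htq' : t q' = (p₀ 0 - q' 0) / dist p₀ q' := by simp only [ht, if_neg hq'p]
    rw [htq, htq', div_eq_div_iff (ne_of_gt hnu) (ne_of_gt hnv)] at heq
    have := planar_eq (q 0 - p₀ 0) (q 1 - p₀ 1) (q' 0 - p₀ 0) (q' 1 - p₀ 1)
      (dist p₀ q) (dist p₀ q') hnu hnv hsqu hsqv hu2 hv2 hu20 hv20 (by nlinarith)
    have hs0 : sig p₀ q q' = 0 := by simp only [sig]; linarith [this]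
    exact sig_ne_of_genpos hgp hp₀P hq hq' (Ne.symm hqp) (Ne.symm hq'p) hne' hs0
  refine ⟨t, ?_, ?_⟩
  · -- injectivity
    intro q hq q' hq' heq
    by_cases h1 : q = p₀ <;> by_cases h2 : q' = p₀
    · rw [h1, h2]
    · exfalso
      have hlb := htlb q' hq' h2
      simp only [ht, if_neg h2] at hlb
      rw [h1] at heq
      simp only [ht, if_pos rfl, if_neg h2] at heq
      linarith
    · exfalso
      have hlb := htlb q hq h1
      simp only [ht, if_neg h1] at hlb
      rw [h2] at heq
      simp only [ht, if_pos rfl, if_neg h1] at heq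
      linarith
    · exact key2 q hq h1 q' hq' h2 heq
  · -- TRI
    intro x hx y hy z hz hxy hyz
    have hynp : y ≠ p₀ := by
      intro he
      by_cases h : x = p₀
      · rw [h, ← he] at hxy; exact lt_irrefl _ hxy
      · have hlb := htlb x hx h
        rw [he] at hxy
        simp only [ht, if_pos rfl] at hxy hlb
        rw [if_neg h] at hxy hlb
        linarith
    have hznp : z ≠ p₀ := by
      intro he
      have hlb := htlb y hy hynp
      rw [he] at hyz
      simp only [ht, if_pos rfl] at hyz hlb
      rw [if_neg hynp] at hyz hlb
      linarith
    by_cases hxp : x = p₀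
    · rw [hxp]; exact key1 y hy hynp z hz hznp hyz
    · have hxyne : x ≠ y := fun h => by rw [h] at hxy; exact lt_irrefl _ hxy
      have hyzne : y ≠ z := fun h => by rw [h] at hyz; exact lt_irrefl _ hyz
      have hxzne : x ≠ z := fun h => by rw [h] at hxy; linarith
      have h1 : 0 < sig p₀ x y := key1 x hx hxp y hy hynp hxy
      have h2 : 0 < sig p₀ y z := key1 y hy hynp z hz hznp hyz
      have hS : 0 < sig p₀ x z := key1 x hx hxp z hz hznp (lt_trans hxy hyz)
      by_contra hcon
      push_neg at hcon
      have hne0 : sig x y z ≠ 0 := sig_ne_of_genpos hgp hx hy hz hxyne hxzne hyzne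
      have hneg : sig x y z < 0 := lt_of_le_of_ne hcon hne0
      -- y in convex hull of {p₀, x, z}
      have hyx : sig y x z = - sig x y z := by simp only [sig]; ring
      have hmem : y ∈ convexHull ℝ ({p₀, x, z} : Set Pt) := by
        apply mem_convexHull_triangle p₀ x z y
          (sig y x z / sig p₀ x z) (sig p₀ y z / sig p₀ x z) (sig p₀ x y / sig p₀ x z)
        · rw [hyx]; exact div_pos (by linarith) hS
        · exact div_pos h2 hS
        · exact div_pos h1 hS
        · have := barycentric_sum p₀ x z y
          field_simp
          linarith
        · exact barycentric p₀ x z y (ne_of_gt hS)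
      have hsub : ({p₀, x, z} : Set Pt) ⊆ (↑P : Set Pt) \ {y} := by
        intro w hw
        rcases hw with rfl | rfl | rfl
        · exact ⟨hp₀P, fun h => hynp (by simpa using h.symm)⟩
        · exact ⟨hx, fun h => hxyne (by simpa using h)⟩
        · exact ⟨hz, fun h => hyzne (by simpa [eq_comm] using h)⟩
      exact hcv y hy (convexHull_mono hsub hmem)

section Order
variable {P : Finset Pt} {t : Pt → ℝ}
  (hinj : Set.InjOn t ↑P)
  (htri : ∀ x ∈ P, ∀ y ∈ P, ∀ z ∈ P, t x < t y → t y < t z → 0 < sig x y z)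

lemma sig_cycle' (a b c : Pt) : sig a b c = sig c a b := by simp only [sig]; ring
lemma sig_swap23 (a b c : Pt) : sig a b c = - sig a c b := by simp only [sig]; ring

include htri in
lemma sig_pos_out {a b c : Pt} (ha : a ∈ P) (hb : b ∈ P) (hc : c ∈ P)
    (hab : t a < t b) (hout : t c < t a ∨ t b < t c) : 0 < sig a b c := by
  rcases hout with h | h
  · have h5 := htri c hc a ha b hb h hab
    have : sig a b c = sig c a b := by simp only [sig]; ring
    rw [this]; exact h5
  · exact htri a ha b hb c hc hab h

include htri in
lemma sig_neg_in {a b c : Pt} (ha : a ∈ P) (hb : b ∈ P) (hc : c ∈ P)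
    (h1 : t a < t c) (h2 : t c < t b) : sig a b c < 0 := by
  have := htri a ha c hc b hb h1 h2
  rw [sig_swap23 a b c]; linarith

include hinj in
lemma ne_of_t {a b : Pt} (ha : a ∈ P) (hb : b ∈ P) (h : t a ≠ t b) : a ≠ b :=
  fun he => h (by rw [he])

include hinj htri in
lemma cross_of_interleave {a b c d : Pt} (ha : a ∈ P) (hb : b ∈ P) (hc : c ∈ P) (hd : d ∈ P)
    (h1 : t a < t c) (h2 : t c < t b) (h3 : t d < t a ∨ t b < t d) :
    SegCross a b c d := by
  have hdta : t d ≠ t a := by rcases h3 with h|h; exact ne_of_lt h; exact ne_of_gt (by linarith)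
  have hdtb : t d ≠ t b := by rcases h3 with h|h; exact ne_of_lt (by linarith); exact ne_of_gt h
  have hdtc : t d ≠ t c := by rcases h3 with h|h; exact ne_of_lt (by linarith); exact ne_of_gt (by linarith)
  have hab : a ≠ b := ne_of_t hinj ha hb (ne_of_lt (by linarith))
  have hac : a ≠ c := ne_of_t hinj ha hc (ne_of_lt h1)
  have had : a ≠ d := ne_of_t hinj ha hd (Ne.symm hdta)
  have hbc : b ≠ c := ne_of_t hinj hb hc (ne_of_gt h2)
  have hbd : b ≠ d := ne_of_t hinj hb hd (Ne.symm hdtb)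
  have hcd : c ≠ d := ne_of_t hinj hc hd (Ne.symm hdtc)
  refine ⟨hab, hac, had, hbc, hbd, hcd, ?_⟩
  apply cross_core a b c d hab
  · have hn : sig a b c < 0 := sig_neg_in htri ha hb hc h1 h2
    have hp : 0 < sig a b d := sig_pos_out htri ha hb hd (by linarith) h3
    nlinarith
  · rcases h3 with h | h
    · -- d before a : chord (d,c), a inside, b outside
      have hn : sig d c a < 0 := sig_neg_in htri hd hc ha h h1
      have hp : 0 < sig d c b := sig_pos_out htri hd hc hb (by linarith) (Or.inr h2)
      have e1 : sig c d a = - sig d c a := by simp only [sig]; ring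
      have e2 : sig c d b = - sig d c b := by simp only [sig]; ring
      rw [e1, e2]; nlinarith
    · -- d after b : chord (c,d), b inside, a outside
      have hn : sig c d b < 0 := sig_neg_in htri hc hd hb h2 h
      have hp : 0 < sig c d a := sig_pos_out htri hc hd ha (by linarith) (Or.inl h1)
      nlinarith

include hinj htri in
lemma consecutive_disjoint {a b c d : Pt} (ha : a ∈ P) (hb : b ∈ P) (hc : c ∈ P) (hd : d ∈ P)
    (hab : t a < t b)
    (hcons : ∀ x ∈ P, x ≠ a → x ≠ b → t x < t a ∨ t b < t x)
    (hca : c ≠ a) (hcb : c ≠ b) (hda : d ≠ a) (hdb : d ≠ b) :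
    openSegment ℝ a b ∩ openSegment ℝ c d = ∅ := by
  have h1 : 0 < sig a b c := sig_pos_out htri ha hb hc hab (hcons c hc hca hcb)
  have h2 : 0 < sig a b d := sig_pos_out htri ha hb hd hab (hcons d hd hda hdb)
  exact openSegment_disjoint_of_side a b c d
    (ne_of_t hinj ha hb (ne_of_lt hab)) (by nlinarith)
end Order

lemma segCross_swap_left {a b c d : Pt} (h : SegCross a b c d) : SegCross b a c d := by
  obtain ⟨h1, h2, h3, h4, h5, h6, h7⟩ := h
  exact ⟨h1.symm, h4, h5, h2, h3, h6, by rwa [openSegment_symm] at h7⟩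

lemma segCross_swap_right {a b c d : Pt} (h : SegCross a b c d) : SegCross a b d c := by
  obtain ⟨h1, h2, h3, h4, h5, h6, h7⟩ := h
  exact ⟨h1, h3, h2, h5, h4, h6.symm, by rw [openSegment_symm ℝ d c]; exact h7⟩

lemma segCross_comm {a b c d : Pt} (h : SegCross a b c d) : SegCross c d a b := by
  obtain ⟨h1, h2, h3, h4, h5, h6, h7⟩ := h
  exact ⟨h6, h2.symm, h4.symm, h3.symm, h5.symm, h1, by rwa [Set.inter_comm] at h7⟩

section Match
variable {R B : Finset Pt} {M : Set (Pt × Pt)}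

lemma edge_eq_fst (hM : IsBiPM R B M) {e f : Pt × Pt} (he : e ∈ M) (hf : f ∈ M)
    (h : e.1 = f.1) : e = f := by
  have h1 := hM.1 e he
  obtain ⟨e', -, hu⟩ := hM.2.1 e.1 h1.1
  rw [hu e ⟨he, rfl⟩, hu f ⟨hf, h.symm⟩]

lemma edge_eq_snd (hM : IsBiPM R B M) {e f : Pt × Pt} (he : e ∈ M) (hf : f ∈ M)
    (h : e.2 = f.2) : e = f := by
  have h1 := hM.1 e he
  obtain ⟨e', -, hu⟩ := hM.2.2 e.2 h1.2
  rw [hu e ⟨he, rfl⟩, hu f ⟨hf, h.symm⟩]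

lemma flip_isBiPM (hM : IsBiPM R B M) {r b r' b' : Pt}
    (h1 : (r, b) ∈ M) (h2 : (r', b') ∈ M) (hrr : r ≠ r') (hbb : b ≠ b') :
    IsBiPM R B ((M \ {(r, b), (r', b')}) ∪ {(r, b'), (r', b)}) := by
  have hrR : r ∈ R := (hM.1 _ h1).1
  have hbB : b ∈ B := (hM.1 _ h1).2
  have hr'R : r' ∈ R := (hM.1 _ h2).1
  have hb'B : b' ∈ B := (hM.1 _ h2).2
  constructor
  · rintro e (⟨he, -⟩ | he)
    · exact hM.1 e he
    · rcases he with he | he <;> rw [he] <;> exact ⟨by assumption, by assumption⟩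
  constructor
  · intro rr hrr'
    by_cases hc1 : rr = r
    · subst hc1
      refine ⟨(rr, b'), ⟨Or.inr (Or.inl rfl), rfl⟩, ?_⟩
      rintro f ⟨(⟨hf, hnf⟩ | hf), hf1⟩
      · exfalso; exact hnf (Or.inl (edge_eq_fst hM hf h1 hf1))
      · rcases hf with hf | hf
        · rw [hf]
        · exfalso; rw [hf] at hf1; exact hrr hf1.symm
    · by_cases hc2 : rr = r'
      · subst hc2
        refine ⟨(rr, b), ⟨Or.inr (Or.inr rfl), rfl⟩, ?_⟩
        rintro f ⟨(⟨hf, hnf⟩ | hf), hf1⟩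
        · exfalso; exact hnf (Or.inr (edge_eq_fst hM hf h2 hf1))
        · rcases hf with hf | hf
          · exfalso; rw [hf] at hf1; exact hrr hf1
          · rw [hf]
      · obtain ⟨e, ⟨heM, he1⟩, hu⟩ := hM.2.1 rr hrr'
        refine ⟨e, ⟨Or.inl ⟨heM, ?_⟩, he1⟩, ?_⟩
        · rintro (hh | hh) <;> rw [hh] at he1
          · exact hc1 he1.symm
          · exact hc2 he1.symm
        · rintro f ⟨(⟨hf, -⟩ | hf), hf1⟩
          · exact hu f ⟨hf, hf1⟩
          · exfalso; rcases hf with hf | hf <;> rw [hf] at hf1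
            · exact hc1 hf1.symm
            · exact hc2 hf1.symm
  · intro bb hbb'
    by_cases hc1 : bb = b'
    · subst hc1
      refine ⟨(r, bb), ⟨Or.inr (Or.inl rfl), rfl⟩, ?_⟩
      rintro f ⟨(⟨hf, hnf⟩ | hf), hf1⟩
      · exfalso; exact hnf (Or.inr (edge_eq_snd hM hf h2 hf1))
      · rcases hf with hf | hf
        · rw [hf]
        · exfalso; rw [hf] at hf1; exact hbb hf1
    · by_cases hc2 : bb = b
      · subst hc2
        refine ⟨(r', bb), ⟨Or.inr (Or.inr rfl), rfl⟩, ?_⟩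
        rintro f ⟨(⟨hf, hnf⟩ | hf), hf1⟩
        · exfalso; exact hnf (Or.inl (edge_eq_snd hM hf h1 hf1))
        · rcases hf with hf | hf
          · exfalso; rw [hf] at hf1; exact hbb hf1.symm
          · rw [hf]
      · obtain ⟨e, ⟨heM, he2⟩, hu⟩ := hM.2.2 bb hbb'
        refine ⟨e, ⟨Or.inl ⟨heM, ?_⟩, he2⟩, ?_⟩
        · rintro (hh | hh) <;> rw [hh] at he2
          · exact hc2 he2.symm
          · exact hc1 he2.symm
        · rintro f ⟨(⟨hf, -⟩ | hf), hf1⟩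
          · exact hu f ⟨hf, hf1⟩
          · exfalso; rcases hf with hf | hf <;> rw [hf] at hf1
            · exact hc1 hf1.symm
            · exact hc2 hf1.symm

lemma biFlip_isBiPM (hM : IsBiPM R B M) {M' : Set (Pt × Pt)} (h : BiFlip M M') :
    IsBiPM R B M' := by
  obtain ⟨r, b, r', b', h1, h2, hc, rfl⟩ := h
  exact flip_isBiPM hM h1 h2 hc.2.1 hc.2.2.2.2.1

lemma biFlipsToPlane_mono {M : Set (Pt × Pt)} {k k' : ℕ} (h : BiFlipsToPlane M k)
    (hk : k ≤ k') : BiFlipsToPlane M k' := by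
  obtain ⟨j, g, hj, h0, hs, hp⟩ := h
  exact ⟨j, g, le_trans hj hk, h0, hs, hp⟩

lemma biFlipsToPlane_prepend {M M₁ : Set (Pt × Pt)} {k : ℕ}
    (hfl : BiFlip M M₁) (h : BiFlipsToPlane M₁ k) : BiFlipsToPlane M (k + 1) := by
  obtain ⟨j, g, hj, h0, hs, hp⟩ := h
  refine ⟨j + 1, fun i => if i = 0 then M else g (i - 1), by omega, by simp, ?_, ?_⟩
  · intro i hi
    rcases Nat.eq_zero_or_pos i with rfl | hipos
    · show BiFlip (if (0:ℕ) = 0 then M else g (0 - 1)) (if (0+1:ℕ) = 0 then M else g (0 + 1 - 1))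
      simpa [h0] using hfl
    · have e1 : (if i = 0 then M else g (i-1)) = g (i-1) := by simp [Nat.pos_iff_ne_zero.1 hipos]
      have e2 : (if i + 1 = 0 then M else g (i+1-1)) = g i := by simp
      show BiFlip (if i = 0 then M else g (i - 1)) (if i + 1 = 0 then M else g (i + 1 - 1))
      rw [e1, e2]
      have h3 : i - 1 + 1 = i := by omega
      rw [← h3]
      exact hs (i-1) (by omega)
  · show BiPlane (if j + 1 = 0 then M else g (j + 1 - 1))
    simpa using hp
end Match

/-- unordered membership in the matching -/
def UMem (M : Set (Pt × Pt)) (x y : Pt) : Prop := (x, y) ∈ M ∨ (y, x) ∈ M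

lemma uMem_symm {M : Set (Pt × Pt)} {x y : Pt} (h : UMem M x y) : UMem M y x := h.symm

section Lift
variable {R B : Finset Pt} {M : Set (Pt × Pt)}

/-- Lifting a flip sequence over an additional never-crossed edge. -/
lemma lift_add_edge (hM : IsBiPM R B M) {p q : Pt} (hpR : p ∉ R) (hpB : p ∉ B)
    (hqR : q ∉ R) (hqB : q ∉ B) (hpq : p ≠ q)
    (hsep : ∀ x y : Pt, x ∈ (↑R ∪ ↑B : Set Pt) → y ∈ (↑R ∪ ↑B : Set Pt) →
      openSegment ℝ p q ∩ openSegment ℝ x y = ∅)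
    {k : ℕ} (h : BiFlipsToPlane M k) : BiFlipsToPlane (M ∪ {(p, q)}) k := by
  obtain ⟨j, g, hj, h0, hs, hp⟩ := h
  have inv : ∀ i, i ≤ j → IsBiPM R B (g i) := by
    intro i
    induction i with
    | zero => intro _; rw [h0]; exact hM
    | succ n ih => intro hn; exact biFlip_isBiPM (ih (by omega)) (hs n (by omega))
  refine ⟨j, fun i => g i ∪ {(p, q)}, hj, by show g 0 ∪ {(p,q)} = _; rw [h0], ?_, ?_⟩
  · intro i hi
    show BiFlip (g i ∪ {(p, q)}) (g (i + 1) ∪ {(p, q)})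
    obtain ⟨r, b, r', b', h1, h2, hc, heq⟩ := hs i hi
    have hinv := inv i (le_of_lt hi)
    have hne1 : (p, q) ≠ (r, b) := by
      intro hcon
      have := (hinv.1 _ h1).1
      rw [← (Prod.ext_iff.1 hcon).1] at this
      exact hpR this
    have hne2 : (p, q) ≠ (r', b') := by
      intro hcon
      have := (hinv.1 _ h2).1
      rw [← (Prod.ext_iff.1 hcon).1] at this
      exact hpR this
    refine ⟨r, b, r', b', Or.inl h1, Or.inl h2, hc, ?_⟩
    rw [heq]
    have hee : (p,q) ∉ ({(r, b), (r', b')} : Set (Pt × Pt)) := by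
      simp only [Set.mem_insert_iff, Set.mem_singleton_iff]
      push_neg
      exact ⟨hne1, hne2⟩
    ext x
    simp only [Set.mem_union, Set.mem_diff, Set.mem_singleton_iff]
    constructor
    · rintro ((⟨ha1, ha2⟩ | ha3) | ha4)
      · exact Or.inl ⟨Or.inl ha1, ha2⟩
      · exact Or.inr ha3
      · exact Or.inl ⟨Or.inr ha4, ha4 ▸ hee⟩
    · rintro (⟨(ha1 | ha2), ha3⟩ | ha4)
      · exact Or.inl (Or.inl ⟨ha1, ha3⟩)
      · exact Or.inr ha2
      · exact Or.inl (Or.inr ha4)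
  · show BiPlane (g j ∪ {(p, q)})
    intro e he f hf
    have hinvj := inv j (le_refl j)
    rcases he with he | he <;> rcases hf with hf | hf
    · exact hp e he f hf
    · -- f = (p,q)
      rw [Set.mem_singleton_iff] at hf
      subst hf
      intro hc
      have hnon := hc.2.2.2.2.2.2
      have h1 := (hinvj.1 e he).1
      have h2 := (hinvj.1 e he).2
      rw [Set.inter_comm, hsep e.1 e.2 (Or.inl (Finset.mem_coe.2 h1))
        (Or.inr (Finset.mem_coe.2 h2))] at hnon
      exact Set.not_nonempty_empty hnon
    · rw [Set.mem_singleton_iff] at he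
      subst he
      intro hc
      have hnon := hc.2.2.2.2.2.2
      have h1 := (hinvj.1 f hf).1
      have h2 := (hinvj.1 f hf).2
      rw [hsep f.1 f.2 (Or.inl (Finset.mem_coe.2 h1)) (Or.inr (Finset.mem_coe.2 h2))] at hnon
      exact Set.not_nonempty_empty hnon
    · rw [Set.mem_singleton_iff] at he hf
      subst he; subst hf
      intro hc
      exact hc.2.1 rfl
end Lift

section FS
variable {R B : Finset Pt} {M : Set (Pt × Pt)}

lemma uMem_red (hdisj : Disjoint R B) (hM : IsBiPM R B M) {x y : Pt}
    (h : UMem M x y) (hx : x ∈ R) : (x, y) ∈ M := by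
  rcases h with h | h
  · exact h
  · exact absurd ((hM.1 _ h).2) (fun hc => (Finset.disjoint_left.1 hdisj hx) hc)

lemma uMem_not_red (hdisj : Disjoint R B) (hM : IsBiPM R B M) {x y : Pt}
    (h : UMem M x y) (hx : x ∉ R) : (y, x) ∈ M ∧ x ∈ B ∧ y ∈ R := by
  rcases h with h | h
  · exact absurd (hM.1 _ h).1 hx
  · exact ⟨h, (hM.1 _ h).2, (hM.1 _ h).1⟩

/-- The symmetric flip step: edges {x,y}, {z,v} cross, x and z have the same color;
flip to get edges {x,v}, {z,y}. -/
lemma flip_step (hdisj : Disjoint R B) (hM : IsBiPM R B M) {x y z v : Pt}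
    (hxy : UMem M x y) (hzv : UMem M z v) (hcross : SegCross x y z v)
    (hcol : x ∈ R ↔ z ∈ R) :
    ∃ M', BiFlip M M' ∧ IsBiPM R B M' ∧ UMem M' x v ∧ UMem M' z y ∧
      (∀ p q : Pt, UMem M p q → p ∉ ({x, y, z, v} : Set Pt) →
        q ∉ ({x, y, z, v} : Set Pt) → UMem M' p q) := by
  by_cases hx : x ∈ R
  · have hz : z ∈ R := hcol.1 hx
    have h1 : (x, y) ∈ M := uMem_red hdisj hM hxy hx
    have h2 : (z, v) ∈ M := uMem_red hdisj hM hzv hz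
    refine ⟨(M \ {(x, y), (z, v)}) ∪ {(x, v), (z, y)},
      ⟨x, y, z, v, h1, h2, hcross, rfl⟩,
      flip_isBiPM hM h1 h2 hcross.2.1 hcross.2.2.2.2.1,
      Or.inl (Or.inr (Or.inl rfl)), Or.inl (Or.inr (Or.inr rfl)), ?_⟩
    · intro p q hpq hp hq
      simp only [Set.mem_insert_iff, Set.mem_singleton_iff] at hp hq
      push_neg at hp hq
      rcases hpq with hpq | hpq
      · exact Or.inl (Or.inl ⟨hpq, by
          simp only [Set.mem_insert_iff, Set.mem_singleton_iff, Prod.mk.injEq]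
          push_neg
          exact ⟨fun hc => absurd hc hp.1, fun hc => absurd hc hp.2.2.1⟩⟩)
      · exact Or.inr (Or.inl ⟨hpq, by
          simp only [Set.mem_insert_iff, Set.mem_singleton_iff, Prod.mk.injEq]
          push_neg
          exact ⟨fun hc => absurd hc hq.1, fun hc => absurd hc hq.2.2.1⟩⟩)
  · obtain ⟨h1, hxB, hyR⟩ := uMem_not_red hdisj hM hxy hx
    have hznr : z ∉ R := fun hc => hx (hcol.2 hc)
    obtain ⟨h2, hzB, hvR⟩ := uMem_not_red hdisj hM hzv hznr
    have hcross' : SegCross y x v z := segCross_swap_right (segCross_swap_left hcross)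
    refine ⟨(M \ {(y, x), (v, z)}) ∪ {(y, z), (v, x)},
      ⟨y, x, v, z, h1, h2, hcross', rfl⟩,
      flip_isBiPM hM h1 h2 hcross'.2.1 hcross'.2.2.2.2.1,
      Or.inr (Or.inr (Or.inr rfl)), Or.inr (Or.inr (Or.inl rfl)), ?_⟩
    · intro p q hpq hp hq
      simp only [Set.mem_insert_iff, Set.mem_singleton_iff] at hp hq
      push_neg at hp hq
      rcases hpq with hpq | hpq
      · exact Or.inl (Or.inl ⟨hpq, by
          simp only [Set.mem_insert_iff, Set.mem_singleton_iff, Prod.mk.injEq]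
          push_neg
          exact ⟨fun hc => absurd hc hp.2.1, fun hc => absurd hc hp.2.2.2⟩⟩)
      · exact Or.inr (Or.inl ⟨hpq, by
          simp only [Set.mem_insert_iff, Set.mem_singleton_iff, Prod.mk.injEq]
          push_neg
          exact ⟨fun hc => absurd hc hq.2.1, fun hc => absurd hc hq.2.2.2⟩⟩)
end FS

lemma genPos_mono {S T : Set Pt} (h : GenPos S) (hsub : T ⊆ S) : GenPos T :=
  fun p hp q hq r hr h1 h2 h3 => h p (hsub hp) q (hsub hq) r (hsub hr) h1 h2 h3

lemma convexPos_mono {S T : Set Pt} (h : ConvexPos S) (hsub : T ⊆ S) : ConvexPos T := by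
  intro p hp hc
  exact h p (hsub hp) (convexHull_mono (Set.diff_subset_diff_left hsub) hc)

lemma remove_edge_isBiPM {R B : Finset Pt} {M : Set (Pt × Pt)} (hM : IsBiPM R B M)
    {p q : Pt} (hpq : (p, q) ∈ M) :
    IsBiPM (R.erase p) (B.erase q) (M \ {(p, q)}) := by
  classical
  constructor
  · rintro e ⟨he, hne⟩
    rw [Set.mem_singleton_iff] at hne
    refine ⟨Finset.mem_erase.2 ⟨?_, (hM.1 e he).1⟩, Finset.mem_erase.2 ⟨?_, (hM.1 e he).2⟩⟩
    · intro hc; exact hne (edge_eq_fst hM he hpq hc)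
    · intro hc; exact hne (edge_eq_snd hM he hpq hc)
  constructor
  · intro r hr
    obtain ⟨hrp, hrR⟩ := Finset.mem_erase.1 hr
    obtain ⟨e, ⟨heM, he1⟩, hu⟩ := hM.2.1 r hrR
    have hne : e ≠ (p, q) := by
      intro hc; rw [hc] at he1; exact hrp he1.symm
    exact ⟨e, ⟨⟨heM, by simpa using hne⟩, he1⟩, fun f hf => hu f ⟨hf.1.1, hf.2⟩⟩
  · intro b hb
    obtain ⟨hbq, hbB⟩ := Finset.mem_erase.1 hb
    obtain ⟨e, ⟨heM, he2⟩, hu⟩ := hM.2.2 b hbB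
    have hne : e ≠ (p, q) := by
      intro hc; rw [hc] at he2; exact hbq he2.symm
    exact ⟨e, ⟨⟨heM, by simpa using hne⟩, he2⟩, fun f hf => hu f ⟨hf.1.1, hf.2⟩⟩

set_option maxHeartbeats 1000000 in
theorem main_ind : ∀ m : ℕ, ∀ R B : Finset Pt, ∀ M : Set (Pt × Pt),
    R.card = m → B.card = m → Disjoint R B → GenPos (↑R ∪ ↑B) → ConvexPos (↑R ∪ ↑B) →
    IsBiPM R B M → BiFlipsToPlane M (2 * (m - 1)) := by
  intro m
  induction m using Nat.strong_induction_on with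
  | _ m IH =>
    intro R B M hR hB hdisj hgp hcv hM
    classical
    by_cases hm1 : m ≤ 1
    · -- at most one edge: M is plane
      refine ⟨0, fun _ => M, Nat.zero_le _, rfl, by omega, ?_⟩
      intro e he f hf hc
      have h1 : e.1 = f.1 := by
        have := Finset.card_le_one.1 (hR ▸ hm1) e.1 (hM.1 e he).1 f.1 (hM.1 f hf).1
        exact this
      exact hc.2.1 h1
    push_neg at hm1
    set P := R ∪ B with hP
    have hPcoe : (↑P : Set Pt) = ↑R ∪ ↑B := by simp [hP]
    obtain ⟨t, hinj, htri⟩ := exists_convex_order P (by rw [hPcoe]; exact hgp)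
      (by rw [hPcoe]; exact hcv)
    -- helpers
    have hmemP : ∀ {x y : Pt}, UMem M x y → x ∈ P ∧ y ∈ P := by
      rintro x y (h | h)
      · exact ⟨Finset.mem_union_left _ (hM.1 _ h).1, Finset.mem_union_right _ (hM.1 _ h).2⟩
      · exact ⟨Finset.mem_union_right _ (hM.1 _ h).2, Finset.mem_union_left _ (hM.1 _ h).1⟩
    have hopp : ∀ {x y : Pt}, UMem M x y → (x ∈ R ↔ y ∉ R) := by
      rintro x y (h | h)
      · have h1 := (hM.1 _ h).1
        have h2 := (hM.1 _ h).2
        exact ⟨fun _ => Finset.disjoint_right.1 hdisj h2, fun _ => h1⟩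
      · have h1 := (hM.1 _ h).1
        have h2 := (hM.1 _ h).2
        exact ⟨fun hc => absurd hc (Finset.disjoint_right.1 hdisj h2),
          fun hc => absurd h1 (by tauto)⟩
    have hune : ∀ {x y : Pt}, UMem M x y → x ≠ y := by
      intro x y h hc
      have := hopp h
      rw [hc] at this
      tauto
    have huuniq : ∀ {s p p' : Pt}, UMem M s p → UMem M s p' → p = p' := by
      intro s p p' h1 h2
      by_cases hs : s ∈ R
      · have e1 := uMem_red hdisj hM h1 hs
        have e2 := uMem_red hdisj hM h2 hs
        have := edge_eq_fst hM e1 e2 rfl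
        exact (Prod.ext_iff.1 this).2
      · have e1 := (uMem_not_red hdisj hM h1 hs).1
        have e2 := (uMem_not_red hdisj hM h2 hs).1
        have := edge_eq_snd hM e1 e2 rfl
        exact (Prod.ext_iff.1 this).1
    have htne : ∀ {x y : Pt}, x ∈ P → y ∈ P → x ≠ y → t x ≠ t y := by
      intro x y hx hy hne hc
      exact hne (hinj (Finset.mem_coe.2 hx) (Finset.mem_coe.2 hy) hc)
    -- the matching is finite and nonempty
    have hMfin : M.Finite := by
      apply Set.Finite.subset (Set.Finite.prod R.finite_toSet B.finite_toSet)
      intro e he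
      exact ⟨Finset.mem_coe.2 (hM.1 e he).1, Finset.mem_coe.2 (hM.1 e he).2⟩
    set F := hMfin.toFinset with hF
    have hFne : F.Nonempty := by
      have hRne : R.Nonempty := Finset.card_pos.1 (by omega)
      obtain ⟨r, hr⟩ := hRne
      obtain ⟨e, ⟨heM, -⟩, -⟩ := hM.2.1 r hr
      exact ⟨e, hMfin.mem_toFinset.2 heM⟩
    set weight : Pt × Pt → ℕ := fun e =>
      (P.filter (fun s => min (t e.1) (t e.2) < t s ∧ t s < max (t e.1) (t e.2))).card
      with hweight
    obtain ⟨e₀, he₀F, hmin⟩ := F.exists_min_image weight hFne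
    have he₀ : e₀ ∈ M := hMfin.mem_toFinset.1 he₀F
    have he₀u : UMem M e₀.1 e₀.2 := Or.inl (by simpa using he₀)
    obtain ⟨u, w, huwM, htuw, hm1', hm2'⟩ :
        ∃ u w, UMem M u w ∧ t u < t w ∧
          min (t e₀.1) (t e₀.2) = t u ∧ max (t e₀.1) (t e₀.2) = t w := by
      have h12 := hune he₀u
      have hp1 := (hmemP he₀u).1
      have hp2 := (hmemP he₀u).2
      rcases lt_trichotomy (t e₀.1) (t e₀.2) with h | h | h
      · exact ⟨e₀.1, e₀.2, he₀u, h, min_eq_left h.le, max_eq_right h.le⟩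
      · exact absurd h (htne hp1 hp2 h12)
      · exact ⟨e₀.2, e₀.1, uMem_symm he₀u, h, min_eq_right h.le, max_eq_left h.le⟩
    have huP : u ∈ P := (hmemP huwM).1
    have hwP : w ∈ P := (hmemP huwM).2
    set Inside := P.filter (fun s => t u < t s ∧ t s < t w) with hInside
    have hInw : weight e₀ = Inside.card := by rw [hweight]; simp only [hm1', hm2']; rfl
    -- partners of points inside are outside
    have hpart : ∀ s ∈ Inside, ∃ p, UMem M s p ∧ p ∈ P ∧ (t p < t u ∨ t w < t p) := by
      intro s hs
      obtain ⟨hsP, hsu, hsw⟩ : s ∈ P ∧ t u < t s ∧ t s < t w := by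
        have := Finset.mem_filter.1 hs
        exact ⟨this.1, this.2.1, this.2.2⟩
      obtain ⟨p, hpU⟩ : ∃ p, UMem M s p := by
        rcases Finset.mem_union.1 hsP with hsR | hsB
        · obtain ⟨e, ⟨heM, he1⟩, -⟩ := hM.2.1 s hsR
          exact ⟨e.2, Or.inl (by rw [← he1]; simpa using heM)⟩
        · obtain ⟨e, ⟨heM, he2⟩, -⟩ := hM.2.2 s hsB
          exact ⟨e.1, Or.inr (by rw [← he2]; simpa using heM)⟩
      have hpP : p ∈ P := (hmemP hpU).2
      have hsne_u : s ≠ u := fun hc => by rw [hc] at hsu; exact lt_irrefl _ hsu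
      have hsne_w : s ≠ w := fun hc => by rw [hc] at hsw; exact lt_irrefl _ hsw
      have hpu : p ≠ u := by
        intro hc
        rw [hc] at hpU
        have := huuniq (uMem_symm hpU) huwM
        exact hsne_w this
      have hpw : p ≠ w := by
        intro hc
        rw [hc] at hpU
        have := huuniq (uMem_symm hpU) (uMem_symm huwM)
        exact hsne_u this
      refine ⟨p, hpU, hpP, ?_⟩
      by_contra hcon
      push_neg at hcon
      have htpu : t u < t p := lt_of_le_of_ne hcon.1 (htne huP hpP (Ne.symm hpu))
      have htpw : t p < t w := lt_of_le_of_ne hcon.2 (htne hpP hwP hpw)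
      have hpI : p ∈ Inside := Finset.mem_filter.2 ⟨hpP, htpu, htpw⟩
      -- the edge {s, p} has strictly smaller weight
      obtain ⟨f, hfM, hf12⟩ : ∃ f, f ∈ M ∧ ({f.1, f.2} : Set Pt) = {s, p} := by
        rcases hpU with h | h
        · exact ⟨(s, p), h, rfl⟩
        · exact ⟨(p, s), h, by simp [Set.pair_comm]⟩
      have hfF : f ∈ F := hMfin.mem_toFinset.2 hfM
      have hwle := hmin f hfF
      have hminmax : (min (t f.1) (t f.2) = min (t s) (t p)) ∧
          (max (t f.1) (t f.2) = max (t s) (t p)) := by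
        have : (f.1 = s ∧ f.2 = p) ∨ (f.1 = p ∧ f.2 = s) := by
          have h1 : f.1 ∈ ({s, p} : Set Pt) := hf12 ▸ (by simp)
          have h2 : f.2 ∈ ({s, p} : Set Pt) := hf12 ▸ (by simp)
          have hne12 : f.1 ≠ f.2 := hune (Or.inl (by simpa using hfM))
          rcases h1 with h1 | h1 <;> rcases h2 with h2 | h2
          · exact absurd (h1.trans h2.symm) hne12
          · exact Or.inl ⟨h1, h2⟩
          · exact Or.inr ⟨h1, h2⟩
          · exact absurd (h1.trans h2.symm) hne12
        rcases this with ⟨h1, h2⟩ | ⟨h1, h2⟩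
        · rw [h1, h2]; exact ⟨rfl, rfl⟩
        · rw [h1, h2]; exact ⟨min_comm _ _, max_comm _ _⟩
      have hsub : P.filter (fun x => min (t f.1) (t f.2) < t x ∧ t x < max (t f.1) (t f.2))
          ⊆ Inside \ {s, p} := by
        intro x hx
        obtain ⟨hxP, hx1, hx2⟩ : x ∈ P ∧ min (t s) (t p) < t x ∧ t x < max (t s) (t p) := by
          have := Finset.mem_filter.1 hx
          rw [hminmax.1, hminmax.2] at this
          exact ⟨this.1, this.2.1, this.2.2⟩
        have hxI : x ∈ Inside := by
          refine Finset.mem_filter.2 ⟨hxP, ?_, ?_⟩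
          · calc t u < min (t s) (t p) := lt_min hsu htpu
              _ < t x := hx1
          · calc t x < max (t s) (t p) := hx2
              _ < t w := max_lt hsw htpw
        refine Finset.mem_sdiff.2 ⟨hxI, ?_⟩
        simp only [Finset.mem_insert, Finset.mem_singleton]
        push_neg
        constructor
        · intro hc; rw [hc] at hx1 hx2
          rcases le_or_gt (t s) (t p) with h | h
          · rw [min_eq_left h] at hx1; exact lt_irrefl _ hx1
          · rw [max_eq_left h.le] at hx2; exact lt_irrefl _ hx2
        · intro hc; rw [hc] at hx1 hx2
          rcases le_or_gt (t s) (t p) with h | h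
          · rw [max_eq_right h] at hx2; exact lt_irrefl _ hx2
          · rw [min_eq_right h.le] at hx1; exact lt_irrefl _ hx1
      have hcard : weight f ≤ Inside.card - 2 := by
        have h1 := Finset.card_le_card hsub
        have h2 : (Inside \ {s, p}).card = Inside.card - 2 := by
          rw [Finset.card_sdiff_of_subset]
          · congr 1
            rw [Finset.card_insert_of_notMem (by simp [hune hpU]), Finset.card_singleton]
          · intro x hx
            simp only [Finset.mem_insert, Finset.mem_singleton] at hx
            rcases hx with rfl | rfl
            · exact hs
            · exact hpI
        simp only [hweight] at h1 ⊢
        omega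
      have h2I : 2 ≤ Inside.card := by
        have : ({s, p} : Finset Pt).card = 2 := by
          rw [Finset.card_insert_of_notMem (by simp [hune hpU]), Finset.card_singleton]
        rw [← this]
        apply Finset.card_le_card
        intro x hx
        simp only [Finset.mem_insert, Finset.mem_singleton] at hx
        rcases hx with rfl | rfl
        · exact hs
        · exact hpI
      rw [hInw] at hwle
      omega
    -- install a consecutive matched pair within ≤ 2 flips
    obtain ⟨c, d, M₂, nf, hnf2, hchain, hM₂, hucd, hcP, hdP, htcd, hconscd⟩ :
        ∃ c d M₂ nf, nf ≤ 2 ∧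
          (∀ K : ℕ, BiFlipsToPlane M₂ K → BiFlipsToPlane M (K + nf)) ∧
          IsBiPM R B M₂ ∧ UMem M₂ c d ∧ c ∈ P ∧ d ∈ P ∧ t c < t d ∧
          (∀ x ∈ P, x ≠ c → x ≠ d → t x < t c ∨ t d < t x) := by
      rcases Finset.eq_empty_or_nonempty Inside with hIe | hIne
      · refine ⟨u, w, M, 0, by omega, fun K h => by simpa using h, hM, huwM, huP, hwP, htuw, ?_⟩
        intro x hx hxu hxw
        have hnb : x ∉ Inside := by rw [hIe]; exact Finset.notMem_empty x
        have h1 : ¬(t u < t x ∧ t x < t w) := fun hc =>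
          hnb (Finset.mem_filter.2 ⟨hx, hc⟩)
        rcases lt_trichotomy (t x) (t u) with h | h | h
        · exact Or.inl h
        · exact absurd h (htne hx huP hxu)
        · right
          rcases lt_trichotomy (t x) (t w) with h' | h' | h'
          · exact absurd ⟨h, h'⟩ h1
          · exact absurd h' (htne hx hwP hxw)
          · exact h'
      · obtain ⟨z1, hz1I, hz1min⟩ := Inside.exists_min_image t hIne
        obtain ⟨zk, hzkI, hzkmax⟩ := Inside.exists_max_image t hIne
        have hz1P : z1 ∈ P := (Finset.mem_filter.1 hz1I).1
        have htz1 : t u < t z1 ∧ t z1 < t w := (Finset.mem_filter.1 hz1I).2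
        have hzkP : zk ∈ P := (Finset.mem_filter.1 hzkI).1
        have htzk : t u < t zk ∧ t zk < t w := (Finset.mem_filter.1 hzkI).2
        by_cases hcol1 : (z1 ∈ R ↔ u ∈ R)
        · by_cases hcolk : (zk ∈ R ↔ u ∈ R)
          · -- Branch B : install (zk, w) with one flip
            obtain ⟨pk, hpkU, hpkP, hpkout⟩ := hpart zk hzkI
            have hcrossk : SegCross u w zk pk :=
              cross_of_interleave hinj htri huP hwP hzkP hpkP htzk.1 htzk.2 hpkout
            obtain ⟨M₁, hflip, hM₁, hu1, hu2, -⟩ :=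
              flip_step hdisj hM huwM hpkU hcrossk hcolk.symm
            refine ⟨zk, w, M₁, 1, by omega,
              fun K h => biFlipsToPlane_prepend hflip h, hM₁, hu2, hzkP, hwP, htzk.2, ?_⟩
            intro x hx hxzk hxw
            rcases lt_trichotomy (t x) (t zk) with h | h | h
            · exact Or.inl h
            · exact absurd h (htne hx hzkP hxzk)
            · right
              rcases lt_trichotomy (t x) (t w) with h' | h' | h'
              · exfalso
                have hxI : x ∈ Inside := Finset.mem_filter.2 ⟨hx, lt_trans htzk.1 h, h'⟩
                have := hzkmax x hxI
                linarith
              · exact absurd h' (htne hx hwP hxw)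
              · exact h'
          · -- Branch C : two flips, install consecutive (z, z') at the color change
            set S := Inside.filter (fun s => ¬(s ∈ R ↔ u ∈ R)) with hS
            have hSne : S.Nonempty := ⟨zk, Finset.mem_filter.2 ⟨hzkI, hcolk⟩⟩
            obtain ⟨z', hz'S, hz'min⟩ := S.exists_min_image t hSne
            have hz'I : z' ∈ Inside := (Finset.mem_filter.1 hz'S).1
            have hz'col : ¬(z' ∈ R ↔ u ∈ R) := (Finset.mem_filter.1 hz'S).2
            have hz'P : z' ∈ P := (Finset.mem_filter.1 hz'I).1
            have htz' : t u < t z' ∧ t z' < t w := (Finset.mem_filter.1 hz'I).2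
            have hz1ne : z1 ≠ z' := fun hc => hz'col (hc ▸ hcol1)
            have htz1z' : t z1 < t z' :=
              lt_of_le_of_ne (hz1min z' hz'I) (htne hz1P hz'P hz1ne)
            set T := Inside.filter (fun s => t s < t z') with hT
            have hTne : T.Nonempty := ⟨z1, Finset.mem_filter.2 ⟨hz1I, htz1z'⟩⟩
            obtain ⟨z, hzT, hzmax⟩ := T.exists_max_image t hTne
            have hzI : z ∈ Inside := (Finset.mem_filter.1 hzT).1
            have htzz' : t z < t z' := (Finset.mem_filter.1 hzT).2
            have hzP : z ∈ P := (Finset.mem_filter.1 hzI).1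
            have htz : t u < t z ∧ t z < t w := (Finset.mem_filter.1 hzI).2
            have hzcol : z ∈ R ↔ u ∈ R := by
              by_contra hc
              have hzS : z ∈ S := Finset.mem_filter.2 ⟨hzI, hc⟩
              have := hz'min z hzS
              linarith
            obtain ⟨a, haU, haP, haout⟩ := hpart z hzI
            obtain ⟨b, hbU, hbP, hbout⟩ := hpart z' hz'I
            have hzz'ne : z ≠ z' := fun hc => by rw [hc] at htzz'; exact lt_irrefl _ htzz'
            have habne : a ≠ b := by
              intro hc
              subst hc
              exact hzz'ne (huuniq (uMem_symm haU) (uMem_symm hbU))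
            have hcolC1 : w ∈ R ↔ z' ∈ R := by
              by_cases hu : u ∈ R
              · have hw : w ∉ R := (hopp huwM).1 hu
                have hz'n : z' ∉ R := fun h => hz'col ⟨fun _ => hu, fun _ => h⟩
                exact ⟨fun h => absurd h hw, fun h => absurd h hz'n⟩
              · have hw : w ∈ R := by
                  by_contra hw
                  exact hu ((hopp huwM).2 hw)
                have hz'y : z' ∈ R := by
                  by_contra hz'n
                  exact hz'col ⟨fun h => absurd h hz'n, fun h => absurd h hu⟩
                exact ⟨fun _ => hz'y, fun _ => hw⟩
            have hcross1 : SegCross w u z' b :=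
              segCross_swap_left
                (cross_of_interleave hinj htri huP hwP hz'P hbP htz'.1 htz'.2 hbout)
            obtain ⟨M₁, hflip1, hM₁, hWb, hZ'u, hkeep⟩ :=
              flip_step hdisj hM (uMem_symm huwM) hbU hcross1 hcolC1
            have hZa1 : UMem M₁ z a := by
              apply hkeep z a haU
              · simp only [Set.mem_insert_iff, Set.mem_singleton_iff]
                push_neg
                refine ⟨?_, ?_, hzz'ne, ?_⟩
                · intro hc; rw [hc] at htz; exact lt_irrefl _ htz.2
                · intro hc; rw [hc] at htz; exact lt_irrefl _ htz.1
                · intro hc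
                  rw [hc] at htz
                  rcases hbout with h | h <;> linarith [htz.1, htz.2]
              · simp only [Set.mem_insert_iff, Set.mem_singleton_iff]
                push_neg
                refine ⟨?_, ?_, ?_, habne⟩
                · intro hc; rw [hc] at haout
                  rcases haout with h | h <;> linarith [htuw]
                · intro hc; rw [hc] at haout
                  rcases haout with h | h <;> linarith [htuw]
                · intro hc; rw [hc] at haout
                  rcases haout with h | h <;> linarith [htz'.1, htz'.2]
            have hcross2 : SegCross u z' z a := by
              apply cross_of_interleave hinj htri huP hz'P hzP haP htz.1 htzz'
              rcases haout with h | h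
              · exact Or.inl h
              · exact Or.inr (lt_trans htz'.2 h)
            obtain ⟨M₂, hflip2, hM₂, hUa, hZz', -⟩ :=
              flip_step hdisj hM₁ (uMem_symm hZ'u) hZa1 hcross2 hzcol.symm
            refine ⟨z, z', M₂, 2, le_refl 2,
              fun K h => biFlipsToPlane_prepend hflip1 (biFlipsToPlane_prepend hflip2 h),
              hM₂, hZz', hzP, hz'P, htzz', ?_⟩
            intro x hx hxz hxz'
            rcases lt_trichotomy (t x) (t z) with h | h | h
            · exact Or.inl h
            · exact absurd h (htne hx hzP hxz)
            · right
              rcases lt_trichotomy (t x) (t z') with h' | h' | h'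
              · exfalso
                have hxI : x ∈ Inside := Finset.mem_filter.2
                  ⟨hx, lt_trans htz.1 h, lt_trans h' htz'.2⟩
                have hxT : x ∈ T := Finset.mem_filter.2 ⟨hxI, h'⟩
                have := hzmax x hxT
                linarith
              · exact absurd h' (htne hx hz'P hxz')
              · exact h'
        · -- Branch A : install (u, z1) with one flip
          obtain ⟨p1, hp1U, hp1P, hp1out⟩ := hpart z1 hz1I
          have hcross1 : SegCross u w z1 p1 :=
            cross_of_interleave hinj htri huP hwP hz1P hp1P htz1.1 htz1.2 hp1out
          have hcolA : w ∈ R ↔ z1 ∈ R := by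
            by_cases hu : u ∈ R
            · have hw : w ∉ R := (hopp huwM).1 hu
              have hz1n : z1 ∉ R := fun h => hcol1 ⟨fun _ => hu, fun _ => h⟩
              exact ⟨fun h => absurd h hw, fun h => absurd h hz1n⟩
            · have hw : w ∈ R := by
                by_contra hw
                exact hu ((hopp huwM).2 hw)
              have hz1y : z1 ∈ R := by
                by_contra hz1n
                exact hcol1 ⟨fun h => absurd h hz1n, fun h => absurd h hu⟩
              exact ⟨fun _ => hz1y, fun _ => hw⟩
          obtain ⟨M₁, hflip, hM₁, hu1, hu2, -⟩ :=
            flip_step hdisj hM (uMem_symm huwM) hp1U (segCross_swap_left hcross1) hcolA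
          refine ⟨u, z1, M₁, 1, by omega,
            fun K h => biFlipsToPlane_prepend hflip h, hM₁, uMem_symm hu2, huP, hz1P,
            htz1.1, ?_⟩
          intro x hx hxu hxz1
          rcases lt_trichotomy (t x) (t u) with h | h | h
          · exact Or.inl h
          · exact absurd h (htne hx huP hxu)
          · right
            rcases lt_trichotomy (t x) (t z1) with h' | h' | h'
            · exfalso
              have hxI : x ∈ Inside := Finset.mem_filter.2 ⟨hx, h, lt_trans h' htz1.2⟩
              have := hz1min x hxI
              linarith
            · exact absurd h' (htne hx hz1P hxz1)
            · exact h'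
    -- orient the installed edge
    obtain ⟨p, q, hpqM₂, hcase⟩ :
        ∃ p q, (p, q) ∈ M₂ ∧ ((p = c ∧ q = d) ∨ (p = d ∧ q = c)) := by
      by_cases hcR : c ∈ R
      · exact ⟨c, d, uMem_red hdisj hM₂ hucd hcR, Or.inl ⟨rfl, rfl⟩⟩
      · exact ⟨d, c, (uMem_not_red hdisj hM₂ hucd hcR).1, Or.inr ⟨rfl, rfl⟩⟩
    have hpR : p ∈ R := (hM₂.1 _ hpqM₂).1
    have hqB : q ∈ B := (hM₂.1 _ hpqM₂).2
    have hpnB : p ∉ B := Finset.disjoint_left.1 hdisj hpR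
    have hqnR : q ∉ R := Finset.disjoint_right.1 hdisj hqB
    have hpqne : p ≠ q := fun hc => hpnB (hc ▸ hqB)
    have hM₃ := remove_edge_isBiPM hM₂ hpqM₂
    have hcardR : (R.erase p).card = m - 1 := by rw [Finset.card_erase_of_mem hpR, hR]
    have hcardB : (B.erase q).card = m - 1 := by rw [Finset.card_erase_of_mem hqB, hB]
    have hdisj' : Disjoint (R.erase p) (B.erase q) :=
      Finset.disjoint_of_subset_left (Finset.erase_subset _ _)
        (Finset.disjoint_of_subset_right (Finset.erase_subset _ _) hdisj)
    have hsub' : (↑(R.erase p) ∪ ↑(B.erase q) : Set Pt) ⊆ ↑R ∪ ↑B := by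
      rintro x (hx | hx)
      · exact Or.inl (Finset.mem_coe.2 (Finset.mem_of_mem_erase (Finset.mem_coe.1 hx)))
      · exact Or.inr (Finset.mem_coe.2 (Finset.mem_of_mem_erase (Finset.mem_coe.1 hx)))
    have hIH := IH (m - 1) (by omega) (R.erase p) (B.erase q) (M₂ \ {(p, q)})
      hcardR hcardB hdisj' (genPos_mono hgp hsub') (convexPos_mono hcv hsub') hM₃
    have hmemPt : ∀ x : Pt, x ∈ (↑(R.erase p) ∪ ↑(B.erase q) : Set Pt) →
        x ∈ P ∧ x ≠ c ∧ x ≠ d := by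
      rintro x (hx | hx)
      · have h1 := Finset.mem_erase.1 (Finset.mem_coe.1 hx)
        have hxq : x ≠ q := fun hc => (Finset.disjoint_left.1 hdisj h1.2) (hc ▸ hqB)
        have hxP : x ∈ P := Finset.mem_union_left _ h1.2
        rcases hcase with ⟨hpc, hqd⟩ | ⟨hpd, hqc⟩
        · exact ⟨hxP, hpc ▸ h1.1, hqd ▸ hxq⟩
        · exact ⟨hxP, hqc ▸ hxq, hpd ▸ h1.1⟩
      · have h1 := Finset.mem_erase.1 (Finset.mem_coe.1 hx)
        have hxp : x ≠ p := fun hc => (Finset.disjoint_right.1 hdisj h1.2) (hc ▸ hpR)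
        have hxP : x ∈ P := Finset.mem_union_right _ h1.2
        rcases hcase with ⟨hpc, hqd⟩ | ⟨hpd, hqc⟩
        · exact ⟨hxP, hpc ▸ hxp, hqd ▸ h1.1⟩
        · exact ⟨hxP, hqc ▸ h1.1, hpd ▸ hxp⟩
    have hsep : ∀ x y : Pt, x ∈ (↑(R.erase p) ∪ ↑(B.erase q) : Set Pt) →
        y ∈ (↑(R.erase p) ∪ ↑(B.erase q) : Set Pt) →
        openSegment ℝ p q ∩ openSegment ℝ x y = ∅ := by
      intro x y hx hy
      obtain ⟨hxP, hxc, hxd⟩ := hmemPt x hx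
      obtain ⟨hyP, hyc, hyd⟩ := hmemPt y hy
      have hkey := consecutive_disjoint hinj htri hcP hdP hxP hyP htcd hconscd hxc hxd hyc hyd
      rcases hcase with ⟨hpc, hqd⟩ | ⟨hpd, hqc⟩
      · rw [hpc, hqd]; exact hkey
      · rw [hpd, hqc, openSegment_symm]; exact hkey
    have hlift := lift_add_edge hM₃ (Finset.notMem_erase p R)
      (fun hc => hpnB (Finset.mem_of_mem_erase hc))
      (fun hc => hqnR (Finset.mem_of_mem_erase hc))
      (Finset.notMem_erase q B) hpqne hsep hIH
    have hM₂eq : (M₂ \ {(p, q)}) ∪ {(p, q)} = M₂ :=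
      Set.diff_union_of_subset (Set.singleton_subset_iff.2 hpqM₂)
    rw [hM₂eq] at hlift
    have hfin := hchain _ hlift
    exact biFlipsToPlane_mono hfin (by omega)


/-- Every perfect bichromatic matching on `n/2` red and `n/2` blue
points in convex (and general) position can be transformed into a plane perfect
bichromatic matching by at most `n - 2` flips. -/
theorem stmt15 (n : ℕ) (hn : Even n) (R B : Finset Pt)
    (hR : R.card = n / 2) (hB : B.card = n / 2) (hdisj : Disjoint R B)
    (hgp : GenPos (↑R ∪ ↑B)) (hcv : ConvexPos (↑R ∪ ↑B))
    (M : Set (Pt × Pt)) (hM : IsBiPM R B M) :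
    BiFlipsToPlane M (n - 2) := by
  have hmain := main_ind (n / 2) R B M hR hB hdisj hgp hcv hM
  apply biFlipsToPlane_mono hmain
  obtain ⟨k, hk⟩ := hn
  omega
end
end

section
/- Let P be a set of n points in the plane consisting of n/2 blue points lying on a horizontal line ℓ and n/2 red points lying strictly above ℓ, with no three points of P collinear except blue points on ℓ. Let M be a perfect bichromatic matching on P in which the rightmost blue point b is matched to the red point r of maximum height (the topmost red point, assumed unique). If the matching M \ {br} is plane, then M can be transformed into a plane matching by at most n/2 − 1 flips; that is, f(M) ≤ n/2 − 1. -/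
open EuclideanGeometry Real

noncomputable section

namespace S17

/-- x-value, at height `c + y`, of the line through the point `(β, c)` and the point `r`. -/
def xv (c β : ℝ) (r : Pt) (y : ℝ) : ℝ := β + y * ((r 0 - β) / (r 1 - c))

lemma xv_zero (c β : ℝ) (r : Pt) : xv c β r 0 = β := by simp [xv]

lemma xv_top (c β : ℝ) (r : Pt) (h : c < r 1) : xv c β r (r 1 - c) = r 0 := by
  have h0 : r 1 - c ≠ 0 := sub_ne_zero.mpr (ne_of_gt h)
  rw [xv]
  field_simp
  ring

/-- difference of two `xv`'s is affine in `y`. -/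
lemma xv_sub (c β β' : ℝ) (r r' : Pt) (y : ℝ) :
    xv c β r y - xv c β' r' y = (β - β') + y * ((r 0 - β) / (r 1 - c) - (r' 0 - β') / (r' 1 - c)) := by
  simp [xv]; ring

/-- affine sign lemmas -/
lemma aff_nonpos {a k M y : ℝ} (h0 : a ≤ 0) (hM : a + M * k ≤ 0) (hy0 : 0 ≤ y) (hyM : y ≤ M) :
    a + y * k ≤ 0 := by
  rcases le_or_gt k 0 with hk | hk
  · nlinarith
  · nlinarith

lemma aff_neg {a k M y : ℝ} (h0 : a < 0) (hM : a + M * k < 0) (hy0 : 0 ≤ y) (hyM : y ≤ M) :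
    a + y * k < 0 := by
  rcases le_or_gt k 0 with hk | hk
  · nlinarith
  · nlinarith

lemma aff_pos {a k M y : ℝ} (h0 : 0 < a) (hM : 0 < a + M * k) (hy0 : 0 ≤ y) (hyM : y ≤ M) :
    0 < a + y * k := by
  rcases le_or_gt k 0 with hk | hk
  · nlinarith
  · nlinarith

/-- a root of an affine function between places of opposite sign. -/
lemma aff_root {a k y₁ y₂ : ℝ} (h1 : 0 < a + y₁ * k) (h2 : a + y₂ * k < 0) (h12 : y₁ < y₂) :
    ∃ y, y₁ < y ∧ y < y₂ ∧ a + y * k = 0 := by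
  have hk : k ≠ 0 := by
    intro h; rw [h] at h1 h2; simp at h1 h2; linarith
  refine ⟨-a / k, ?_, ?_, ?_⟩
  · have hkneg : k < 0 := by
      rcases lt_or_gt_of_ne hk with h | h
      · exact h
      · nlinarith
    rw [lt_div_iff_of_neg hkneg]; nlinarith
  · have hkneg : k < 0 := by
      rcases lt_or_gt_of_ne hk with h | h
      · exact h
      · nlinarith
    rw [div_lt_iff_of_neg hkneg]; nlinarith
  · field_simp
    ring

lemma aff_root_sign {a k M : ℝ} (hM : 0 < M) (h0 : a ≠ 0) (hMv : a + M * k ≠ 0) :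
    (∃ y, 0 < y ∧ y < M ∧ a + y * k = 0) ↔ a * (a + M * k) < 0 := by
  constructor
  · rintro ⟨y, hy0, hyM, hy⟩
    rcases lt_or_gt_of_ne h0 with ha | ha
    · rcases lt_or_gt_of_ne hMv with hb | hb
      · exfalso
        have := aff_neg ha hb (le_of_lt hy0) (le_of_lt hyM)
        linarith
      · nlinarith
    · rcases lt_or_gt_of_ne hMv with hb | hb
      · nlinarith
      · exfalso
        have := aff_pos ha hb (le_of_lt hy0) (le_of_lt hyM)
        linarith
  · intro h
    rcases lt_or_gt_of_ne h0 with ha | ha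
    · have hb : 0 < a + M * k := by nlinarith
      obtain ⟨y, h1, h2, h3⟩ := aff_root (a := -a) (k := -k) (y₁ := 0) (y₂ := M) (by simpa using ha) (by nlinarith) hM
      exact ⟨y, h1, h2, by nlinarith⟩
    · have hb : a + M * k < 0 := by nlinarith
      obtain ⟨y, h1, h2, h3⟩ := aff_root (a := a) (k := k) (y₁ := 0) (y₂ := M) (by simpa using ha) hb hM
      exact ⟨y, h1, h2, h3⟩

end S17

namespace S17

lemma pt_coord_add (x y : Pt) (i : Fin 2) : (x + y) i = x i + y i := rfl
lemma pt_coord_smul (t : ℝ) (x : Pt) (i : Fin 2) : (t • x) i = t * x i := rfl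

lemma pt_ext {x y : Pt} (h0 : x 0 = y 0) (h1 : x 1 = y 1) : x = y := by
  apply PiLp.ext
  intro i
  fin_cases i <;> assumption

lemma mem_openSegment_iff {c : ℝ} {r b : Pt} (hr : c < r 1) (hb : b 1 = c) {z : Pt} :
    z ∈ openSegment ℝ r b ↔ c < z 1 ∧ z 1 < r 1 ∧ z 0 = xv c (b 0) r (z 1 - c) := by
  have hH : (0:ℝ) < r 1 - c := by linarith
  have hH0 : r 1 - c ≠ 0 := ne_of_gt hH
  rw [openSegment_eq_image]
  constructor
  · rintro ⟨t, ⟨ht0, ht1⟩, rfl⟩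
    have hz1 : ((1 - t) • r + t • b) 1 = (1 - t) * r 1 + t * c := by
      rw [pt_coord_add, pt_coord_smul, pt_coord_smul, hb]
    have hz0 : ((1 - t) • r + t • b) 0 = (1 - t) * r 0 + t * b 0 := by
      rw [pt_coord_add, pt_coord_smul, pt_coord_smul]
    show c < ((1 - t) • r + t • b) 1 ∧ ((1 - t) • r + t • b) 1 < r 1 ∧
      ((1 - t) • r + t • b) 0 = xv c (b 0) r (((1 - t) • r + t • b) 1 - c)
    refine ⟨by rw [hz1]; nlinarith, by rw [hz1]; nlinarith, ?_⟩
    rw [hz0, hz1, xv]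
    field_simp
    ring
  · rintro ⟨h1, h2, h3⟩
    refine ⟨1 - (z 1 - c) / (r 1 - c), ⟨?_, ?_⟩, ?_⟩
    · have : (z 1 - c) / (r 1 - c) < 1 := by
        rw [div_lt_one hH]; linarith
      linarith
    · have : 0 < (z 1 - c) / (r 1 - c) := by
        apply div_pos <;> linarith
      linarith
    · show (1 - (1 - (z 1 - c) / (r 1 - c))) • r + (1 - (z 1 - c) / (r 1 - c)) • b = z
      apply pt_ext
      · rw [pt_coord_add, pt_coord_smul, pt_coord_smul, h3, xv]
        field_simp
        ring
      · rw [pt_coord_add, pt_coord_smul, pt_coord_smul, hb]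
        field_simp
        ring

lemma inter_iff {c : ℝ} {r b r' b' : Pt} (hr : c < r 1) (hr' : c < r' 1)
    (hb : b 1 = c) (hb' : b' 1 = c) :
    (openSegment ℝ r b ∩ openSegment ℝ r' b').Nonempty ↔
      ∃ y, 0 < y ∧ y < r 1 - c ∧ y < r' 1 - c ∧ xv c (b 0) r y = xv c (b' 0) r' y := by
  constructor
  · rintro ⟨z, hz1, hz2⟩
    rw [mem_openSegment_iff hr hb] at hz1
    rw [mem_openSegment_iff hr' hb'] at hz2
    exact ⟨z 1 - c, by linarith [hz1.1], by linarith [hz1.2.1], by linarith [hz2.2.1],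
      by rw [← hz1.2.2, ← hz2.2.2]⟩
  · rintro ⟨y, hy0, hy1, hy2, hyeq⟩
    have hH : (0:ℝ) < r 1 - c := by linarith
    have hH0 : r 1 - c ≠ 0 := ne_of_gt hH
    set t : ℝ := 1 - y / (r 1 - c) with ht
    refine ⟨(1 - t) • r + t • b, ?_, ?_⟩
    · rw [mem_openSegment_iff hr hb]
      have hz1 : ((1 - t) • r + t • b) 1 = (1 - t) * r 1 + t * c := by
        rw [pt_coord_add, pt_coord_smul, pt_coord_smul, hb]
      have hz0 : ((1 - t) • r + t • b) 0 = (1 - t) * r 0 + t * b 0 := by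
        rw [pt_coord_add, pt_coord_smul, pt_coord_smul]
      have hty : (1 - t) * (r 1 - c) = y := by rw [ht]; field_simp; ring
      have hz1' : ((1 - t) • r + t • b) 1 = c + y := by rw [hz1]; nlinarith
      refine ⟨by rw [hz1']; linarith, by rw [hz1']; linarith, ?_⟩
      rw [hz0, hz1', xv]
      have : c + y - c = y := by ring
      rw [this]
      field_simp
      linear_combination (r 0 - b 0) * hty
    · rw [mem_openSegment_iff hr' hb']
      have hz1 : ((1 - t) • r + t • b) 1 = (1 - t) * r 1 + t * c := by
        rw [pt_coord_add, pt_coord_smul, pt_coord_smul, hb]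
      have hz0 : ((1 - t) • r + t • b) 0 = (1 - t) * r 0 + t * b 0 := by
        rw [pt_coord_add, pt_coord_smul, pt_coord_smul]
      have hty : (1 - t) * (r 1 - c) = y := by rw [ht]; field_simp; ring
      have hz1' : ((1 - t) • r + t • b) 1 = c + y := by rw [hz1]; nlinarith
      refine ⟨by rw [hz1']; linarith, by rw [hz1']; linarith, ?_⟩
      have : c + y - c = y := by ring
      rw [hz0, hz1', this, ← hyeq, xv]
      field_simp
      linear_combination (r 0 - b 0) * hty

end S17

namespace S17

/-- The crossing criterion: sign version. `M := min` heights. -/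
lemma inter_iff_sign {c : ℝ} {r b r' b' : Pt} (hr : c < r 1) (hr' : c < r' 1)
    (hb : b 1 = c) (hb' : b' 1 = c) (hbb : b 0 ≠ b' 0)
    (hD : xv c (b 0) r (min (r 1 - c) (r' 1 - c)) ≠ xv c (b' 0) r' (min (r 1 - c) (r' 1 - c))) :
    (openSegment ℝ r b ∩ openSegment ℝ r' b').Nonempty ↔
      (b 0 - b' 0) * (xv c (b 0) r (min (r 1 - c) (r' 1 - c))
        - xv c (b' 0) r' (min (r 1 - c) (r' 1 - c))) < 0 := by
  set M : ℝ := min (r 1 - c) (r' 1 - c) with hM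
  have hMpos : 0 < M := lt_min (by linarith) (by linarith)
  set k : ℝ := (r 0 - b 0) / (r 1 - c) - (r' 0 - b' 0) / (r' 1 - c) with hk
  have hsub : ∀ y : ℝ, xv c (b 0) r y - xv c (b' 0) r' y = (b 0 - b' 0) + y * k :=
    fun y => xv_sub c (b 0) (b' 0) r r' y
  rw [inter_iff hr hr' hb hb']
  have h1 : (∃ y, 0 < y ∧ y < r 1 - c ∧ y < r' 1 - c ∧ xv c (b 0) r y = xv c (b' 0) r' y) ↔
      (∃ y, 0 < y ∧ y < M ∧ (b 0 - b' 0) + y * k = 0) := by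
    constructor
    · rintro ⟨y, h0, h1', h2, h3⟩
      exact ⟨y, h0, lt_min h1' h2, by rw [← hsub y, h3]; ring⟩
    · rintro ⟨y, h0, h1', h2⟩
      refine ⟨y, h0, lt_of_lt_of_le h1' (min_le_left _ _), lt_of_lt_of_le h1' (min_le_right _ _), ?_⟩
      have := hsub y
      have h4 : xv c (b 0) r y - xv c (b' 0) r' y = 0 := by rw [this, h2]
      linarith
  rw [h1]
  have hDM : (b 0 - b' 0) + M * k ≠ 0 := by
    intro h
    apply hD
    have := hsub M
    linarith
  rw [aff_root_sign hMpos (sub_ne_zero.mpr hbb) hDM]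
  have := hsub M
  rw [this]

/-- constructing a collinear triple from an `xv` coincidence. -/
lemma collinear_of_xv {c : ℝ} {b r r' : Pt} (hb : b 1 = c) (hr : c < r 1) (hr' : c < r' 1)
    (heq : xv c (b 0) r (r' 1 - c) = r' 0) : Collinear ℝ ({r', b, r} : Set Pt) := by
  have hH : (0:ℝ) < r 1 - c := by linarith
  apply collinear_insert_of_mem_affineSpan_pair (p₁ := r') (p₂ := b) (p₃ := r)
  have : r' = AffineMap.lineMap b r ((r' 1 - c) / (r 1 - c)) := by
    apply pt_ext
    · rw [AffineMap.lineMap_apply]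
      have h2 : (((r' 1 - c) / (r 1 - c)) • (r -ᵥ b) +ᵥ b) 0 = ((r' 1 - c) / (r 1 - c)) * (r 0 - b 0) + b 0 := rfl
      rw [h2, ← heq, xv]
      ring
    · rw [AffineMap.lineMap_apply]
      have h2 : (((r' 1 - c) / (r 1 - c)) • (r -ᵥ b) +ᵥ b) 1 = ((r' 1 - c) / (r 1 - c)) * (r 1 - b 1) + b 1 := rfl
      rw [h2, hb]
      field_simp
      ring

  rw [this]
  exact AffineMap.lineMap_mem_affineSpan_pair _ _ _

end S17

namespace S17

lemma ne_of_height {c : ℝ} {r b : Pt} (hr : c < r 1) (hb : b 1 = c) : r ≠ b := by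
  intro h; rw [h, hb] at hr; exact lt_irrefl c hr

lemma segCross_symm {a b c d : Pt} (h : SegCross a b c d) : SegCross c d a b := by
  obtain ⟨h1, h2, h3, h4, h5, h6, z, hz1, hz2⟩ := h
  exact ⟨h6, h2.symm, h4.symm, h3.symm, h5.symm, h1, z, hz2, hz1⟩

lemma not_segCross_self {a b c d : Pt} (hac : a = c) : ¬ SegCross a b c d := by
  intro h; exact h.2.1 hac

/-- base order + no crossing + nondegeneracy gives order at the min height. -/
lemma not_cross_order {c : ℝ} {r b r' b' : Pt} (hr : c < r 1) (hr' : c < r' 1)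
    (hb : b 1 = c) (hb' : b' 1 = c) (hrr : r ≠ r') (hb0 : b 0 < b' 0)
    (hD : xv c (b 0) r (min (r 1 - c) (r' 1 - c)) ≠ xv c (b' 0) r' (min (r 1 - c) (r' 1 - c)))
    (hnc : ¬ SegCross r b r' b') :
    xv c (b 0) r (min (r 1 - c) (r' 1 - c)) < xv c (b' 0) r' (min (r 1 - c) (r' 1 - c)) := by
  by_contra hcon
  push_neg at hcon
  have hlt : xv c (b' 0) r' (min (r 1 - c) (r' 1 - c)) < xv c (b 0) r (min (r 1 - c) (r' 1 - c)) :=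
    lt_of_le_of_ne hcon (Ne.symm hD)
  apply hnc
  refine ⟨ne_of_height hr hb, hrr, ne_of_height hr hb', (ne_of_height hr' hb).symm, ?_, ne_of_height hr' hb', ?_⟩
  · intro h; rw [h] at hb0; exact lt_irrefl _ hb0
  · rw [inter_iff_sign hr hr' hb hb' (ne_of_lt hb0) hD]
    nlinarith

/-- crossing + base order gives reversed order at the min height. -/
lemma cross_order {c : ℝ} {r b r' b' : Pt} (hr : c < r 1) (hr' : c < r' 1)
    (hb : b 1 = c) (hb' : b' 1 = c) (hb0 : b 0 < b' 0)
    (hD : xv c (b 0) r (min (r 1 - c) (r' 1 - c)) ≠ xv c (b' 0) r' (min (r 1 - c) (r' 1 - c)))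
    (hc : SegCross r b r' b') :
    xv c (b' 0) r' (min (r 1 - c) (r' 1 - c)) < xv c (b 0) r (min (r 1 - c) (r' 1 - c)) := by
  obtain ⟨-, -, -, -, -, -, hne⟩ := hc
  rw [inter_iff_sign hr hr' hb hb' (ne_of_lt hb0) hD] at hne
  nlinarith

/-- building a crossing from reversed order. -/
lemma cross_of_order {c : ℝ} {r b r' b' : Pt} (hr : c < r 1) (hr' : c < r' 1)
    (hb : b 1 = c) (hb' : b' 1 = c) (hrr : r ≠ r') (hb0 : b 0 < b' 0)
    (hlt : xv c (b' 0) r' (min (r 1 - c) (r' 1 - c)) < xv c (b 0) r (min (r 1 - c) (r' 1 - c))) :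
    SegCross r b r' b' := by
  refine ⟨ne_of_height hr hb, hrr, ne_of_height hr hb', (ne_of_height hr' hb).symm, ?_, ne_of_height hr' hb', ?_⟩
  · intro h; rw [h] at hb0; exact lt_irrefl _ hb0
  · rw [inter_iff_sign hr hr' hb hb' (ne_of_lt hb0) (by intro h; rw [h] at hlt; exact lt_irrefl _ hlt)]
    nlinarith

end S17

namespace S17

lemma aff_between_neg {a k y₁ y₂ y : ℝ} (h1 : a + y₁ * k < 0) (h2 : a + y₂ * k < 0)
    (hy1 : y₁ ≤ y) (hy2 : y ≤ y₂) : a + y * k < 0 := by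
  rcases le_or_gt k 0 with hk | hk
  · nlinarith
  · nlinarith

lemma aff_beyond_pos {a k y₁ y₂ y : ℝ} (h1 : a + y₁ * k < 0) (h2 : 0 < a + y₂ * k)
    (h12 : y₁ < y₂) (hy : y₂ ≤ y) : 0 < a + y * k := by
  have hk : 0 < k := by nlinarith
  nlinarith

lemma xv_diff_form (c β β' : ℝ) (r r' : Pt) (y : ℝ) :
    xv c β r y - xv c β' r' y =
      (β - β') + y * ((r 0 - β) / (r 1 - c) - (r' 0 - β') / (r' 1 - c)) := xv_sub c β β' r r' y

lemma xv_between_lt {c β β' : ℝ} {r r' : Pt} {y₁ y₂ y : ℝ}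
    (h1 : xv c β r y₁ < xv c β' r' y₁) (h2 : xv c β r y₂ < xv c β' r' y₂)
    (hy1 : y₁ ≤ y) (hy2 : y ≤ y₂) : xv c β r y < xv c β' r' y := by
  have e1 := xv_diff_form c β β' r r' y₁
  have e2 := xv_diff_form c β β' r r' y₂
  have e3 := xv_diff_form c β β' r r' y
  have := aff_between_neg (a := β - β') (k := (r 0 - β) / (r 1 - c) - (r' 0 - β') / (r' 1 - c))
    (y₁ := y₁) (y₂ := y₂) (y := y) (by linarith) (by linarith) hy1 hy2
  linarith

lemma xv_beyond_lt {c β β' : ℝ} {r r' : Pt} {y₁ y₂ y : ℝ}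
    (h1 : xv c β r y₁ < xv c β' r' y₁) (h2 : xv c β' r' y₂ < xv c β r y₂)
    (h12 : y₁ < y₂) (hy : y₂ ≤ y) : xv c β' r' y < xv c β r y := by
  have e1 := xv_diff_form c β β' r r' y₁
  have e2 := xv_diff_form c β β' r r' y₂
  have e3 := xv_diff_form c β β' r r' y
  have := aff_beyond_pos (a := β - β') (k := (r 0 - β) / (r 1 - c) - (r' 0 - β') / (r' 1 - c))
    (y₁ := y₁) (y₂ := y₂) (y := y) (by linarith) (by linarith) h12 hy
  linarith

lemma xv_root {c β β' : ℝ} {r r' : Pt} {y₁ y₂ : ℝ}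
    (h1 : xv c β' r' y₁ < xv c β r y₁) (h2 : xv c β r y₂ < xv c β' r' y₂)
    (h12 : y₁ < y₂) : ∃ y, y₁ < y ∧ y < y₂ ∧ xv c β r y = xv c β' r' y := by
  have e1 := xv_diff_form c β β' r r' y₁
  have e2 := xv_diff_form c β β' r r' y₂
  obtain ⟨y, hy1, hy2, hy3⟩ := aff_root (a := β - β')
    (k := (r 0 - β) / (r 1 - c) - (r' 0 - β') / (r' 1 - c))
    (y₁ := y₁) (y₂ := y₂) (by linarith) (by linarith) h12
  refine ⟨y, hy1, hy2, ?_⟩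
  have e3 := xv_diff_form c β β' r r' y
  linarith

/-- same base, comparison transfers across positive heights. -/
lemma xv_same_base_lt {c β : ℝ} {r r' : Pt} {y y' : ℝ} (hy : 0 < y) (hy' : 0 < y')
    (h : xv c β r y < xv c β r' y) : xv c β r y' < xv c β r' y' := by
  simp only [xv] at h ⊢
  have hk : (r 0 - β) / (r 1 - c) < (r' 0 - β) / (r' 1 - c) := by nlinarith
  nlinarith

/-- same red, base order: values keep order strictly below the top. -/
lemma xv_same_red_lt {c β β' : ℝ} {r : Pt} {y : ℝ} (hc : c < r 1) (hb : β < β')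
    (h0 : 0 ≤ y) (hy : y < r 1 - c) : xv c β r y < xv c β' r y := by
  simp only [xv]
  have hH : 0 < r 1 - c := by linarith
  have ht1 : y / (r 1 - c) < 1 := by rw [div_lt_one hH]; exact hy
  have ht0 : 0 ≤ y / (r 1 - c) := by positivity
  have e1 : y * ((r 0 - β) / (r 1 - c)) = (y / (r 1 - c)) * (r 0 - β) := by ring
  have e2 : y * ((r 0 - β') / (r 1 - c)) = (y / (r 1 - c)) * (r 0 - β') := by ring
  rw [e1, e2]
  nlinarith

lemma xv_same_red_le {c β β' : ℝ} {r : Pt} {y : ℝ} (hc : c < r 1) (hb : β ≤ β')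
    (h0 : 0 ≤ y) (hy : y ≤ r 1 - c) : xv c β r y ≤ xv c β' r y := by
  simp only [xv]
  have hH : 0 < r 1 - c := by linarith
  have ht1 : y / (r 1 - c) ≤ 1 := by rw [div_le_one hH]; exact hy
  have ht0 : 0 ≤ y / (r 1 - c) := by positivity
  have e1 : y * ((r 0 - β) / (r 1 - c)) = (y / (r 1 - c)) * (r 0 - β) := by ring
  have e2 : y * ((r 0 - β') / (r 1 - c)) = (y / (r 1 - c)) * (r 0 - β') := by ring
  rw [e1, e2]
  nlinarith

end S17

namespace S17

lemma bftp_mono {M : Set (Pt × Pt)} {k k' : ℕ} (h : BiFlipsToPlane M k) (hk : k ≤ k') :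
    BiFlipsToPlane M k' := by
  obtain ⟨j, g, h1, h2, h3, h4⟩ := h
  exact ⟨j, g, le_trans h1 hk, h2, h3, h4⟩

lemma bftp_zero {M : Set (Pt × Pt)} (h : BiPlane M) : BiFlipsToPlane M 0 :=
  ⟨0, fun _ => M, le_refl 0, rfl, fun i hi => absurd hi (Nat.not_lt_zero i), h⟩

lemma bftp_step {M M' : Set (Pt × Pt)} {k : ℕ} (hf : BiFlip M M') (h : BiFlipsToPlane M' k) :
    BiFlipsToPlane M (k + 1) := by
  obtain ⟨j, g, h1, h2, h3, h4⟩ := h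
  refine ⟨j + 1, fun i => if i = 0 then M else g (i - 1), by omega, by simp, ?_, ?_⟩
  · intro i hi
    rcases Nat.eq_zero_or_pos i with h0 | h0
    · subst h0
      simpa [h2] using hf
    · have hne : i ≠ 0 := by omega
      have h5 : i + 1 ≠ 0 := by omega
      show BiFlip (if i = 0 then M else g (i - 1)) (if i + 1 = 0 then M else g (i + 1 - 1))
      rw [if_neg hne, if_neg h5]
      have he : i + 1 - 1 = i - 1 + 1 := by omega
      rw [he]
      exact h3 (i-1) (by omega)
  · have : j + 1 ≠ 0 := by omega
    simpa [this] using h4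

end S17

namespace S17

lemma plane_insert {r₀ bc : Pt} {Mr : Set (Pt × Pt)} (hpl : BiPlane Mr)
    (hnc : ∀ e ∈ Mr, ¬ SegCross r₀ bc e.1 e.2) : BiPlane (insert (r₀, bc) Mr) := by
  intro e he f hf
  rcases Set.mem_insert_iff.1 he with he | he <;> rcases Set.mem_insert_iff.1 hf with hf | hf
  · subst he; subst hf; exact not_segCross_self rfl
  · subst he; exact hnc f hf
  · subst hf; intro h; exact hnc e he (segCross_symm h)
  · exact hpl e he f hf

lemma master (c : ℝ) (R B : Finset Pt)
    (hblue : ∀ b ∈ B, b 1 = c) (hred : ∀ r ∈ R, r 1 > c)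
    (hcol : ∀ p ∈ ↑R ∪ (↑B : Set Pt), ∀ q ∈ ↑R ∪ (↑B : Set Pt),
      ∀ x ∈ ↑R ∪ (↑B : Set Pt), p ≠ q → p ≠ x → q ≠ x →
        Collinear ℝ ({p, q, x} : Set Pt) → (p 1 = c ∧ q 1 = c ∧ x 1 = c))
    (r₀ : Pt) (hr₀R : r₀ ∈ R) (hr₀top : ∀ r ∈ R, r ≠ r₀ → r 1 < r₀ 1) :
    ∀ N : ℕ, ∀ (bc : Pt) (Mr : Set (Pt × Pt)),
    bc ∈ B →
    (B.filter (fun b => b 0 < bc 0)).card ≤ N →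
    (∀ e ∈ Mr, e.1 ∈ R ∧ e.2 ∈ B) →
    (∀ e ∈ Mr, ∀ f ∈ Mr, e ≠ f → e.1 ≠ f.1 ∧ e.2 ≠ f.2) →
    (∀ e ∈ Mr, e.1 ≠ r₀ ∧ e.2 ≠ bc) →
    Mr.Finite →
    BiPlane Mr →
    (∀ e ∈ Mr, SegCross r₀ bc e.1 e.2 → e.2 0 < bc 0) →
    (∀ f ∈ Mr, bc 0 < f.2 0 → ∀ e ∈ Mr, SegCross r₀ bc e.1 e.2 →
      ¬ SegCross e.1 bc f.1 f.2) →
    BiFlipsToPlane (insert (r₀, bc) Mr) N := by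
  intro N
  induction N with
  | zero =>
    intro bc Mr hbcB hcard hPm hinj hne0 hfin hpl h4 h5
    apply bftp_zero
    apply plane_insert hpl
    intro e he hcr
    have : e.2 ∈ B.filter (fun b => b 0 < bc 0) := by
      rw [Finset.mem_filter]
      exact ⟨(hPm e he).2, h4 e he hcr⟩
    have h6 := Finset.card_pos.2 ⟨e.2, this⟩
    exact absurd (lt_of_lt_of_le h6 hcard) (lt_irrefl 0)
  | succ N ih =>
    intro bc Mr hbcB hcard hPm hinj hne0 hfin hpl h4 h5
    classical
    by_cases hex : ∃ e ∈ Mr, SegCross r₀ bc e.1 e.2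
    · -- ambient facts
      have hr₀PS : r₀ ∈ (↑R ∪ ↑B : Set Pt) := Or.inl (by exact_mod_cast hr₀R)
      have hbPS : ∀ b ∈ B, (b : Pt) ∈ (↑R ∪ ↑B : Set Pt) := fun b hb => Or.inr (by exact_mod_cast hb)
      have hrPS : ∀ r ∈ R, (r : Pt) ∈ (↑R ∪ ↑B : Set Pt) := fun r hr => Or.inl (by exact_mod_cast hr)
      have hbc1 : bc 1 = c := hblue bc hbcB
      have hbcPS := hbPS bc hbcB
      have hr₀1 : c < r₀ 1 := hred r₀ hr₀R
      have hHe : ∀ e ∈ Mr, c < e.1 1 := fun e he => hred e.1 (hPm e he).1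
      have hb1 : ∀ e ∈ Mr, e.2 1 = c := fun e he => hblue e.2 (hPm e he).2
      have hHeHs : ∀ e ∈ Mr, e.1 1 < r₀ 1 := fun e he => hr₀top e.1 (hPm e he).1 (hne0 e he).1
      have hePS : ∀ e ∈ Mr, e.1 ∈ (↑R ∪ ↑B : Set Pt) ∧ e.2 ∈ (↑R ∪ ↑B : Set Pt) :=
        fun e he => ⟨hrPS e.1 (hPm e he).1, hbPS e.2 (hPm e he).2⟩
      -- general position consequences
      have noX : ∀ b r r' : Pt, b ∈ (↑R ∪ ↑B : Set Pt) → r ∈ (↑R ∪ ↑B : Set Pt) →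
          r' ∈ (↑R ∪ ↑B : Set Pt) → b 1 = c → c < r 1 → c < r' 1 →
          r ≠ r' → xv c (b 0) r (r' 1 - c) ≠ r' 0 := by
        intro b r r' hbP hrP hr'P hb1' hr1 hr'1 hrr heq
        have hco := collinear_of_xv hb1' hr1 hr'1 heq
        have := hcol r' hr'P b hbP r hrP (ne_of_height hr'1 hb1') hrr.symm
          ((ne_of_height hr1 hb1').symm) hco
        linarith [this.1]
      have hDm : ∀ r b r' b' : Pt, r ∈ (↑R ∪ ↑B : Set Pt) → b ∈ (↑R ∪ ↑B : Set Pt) →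
          r' ∈ (↑R ∪ ↑B : Set Pt) → b' ∈ (↑R ∪ ↑B : Set Pt) → c < r 1 → c < r' 1 →
          b 1 = c → b' 1 = c → r ≠ r' →
          xv c (b 0) r (min (r 1 - c) (r' 1 - c)) ≠ xv c (b' 0) r' (min (r 1 - c) (r' 1 - c)) := by
        intro r b r' b' hrP hbP' hr'P hb'P hr1 hr'1 hb1' hb'1 hrr
        rcases le_total (r 1 - c) (r' 1 - c) with hle | hle
        · rw [min_eq_left hle, xv_top c (b 0) r hr1]
          intro h
          exact noX b' r' r hb'P hr'P hrP hb'1 hr'1 hr1 hrr.symm h.symm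
        · rw [min_eq_right hle, xv_top c (b' 0) r' hr'1]
          intro h
          exact noX b r r' hbP' hrP hr'P hb1' hr1 hr'1 hrr h
      have hblx : ∀ b b' : Pt, b ∈ B → b' ∈ B → b ≠ b' → b 0 ≠ b' 0 := by
        intro b b' hb hb' hne h0
        exact hne (pt_ext h0 (by rw [hblue b hb, hblue b' hb']))
      -- choose the flip partner
      have hCrfin : {e ∈ Mr | SegCross r₀ bc e.1 e.2}.Finite :=
        hfin.subset (fun e he => he.1)
      have hCrne' : hCrfin.toFinset.Nonempty := by
        rw [Set.Finite.toFinset_nonempty]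
        obtain ⟨e, he, hc⟩ := hex
        exact ⟨e, he, hc⟩
      obtain ⟨es, hesT, hmaxT⟩ := Finset.exists_max_image hCrfin.toFinset
        (fun e => (e.1 0 - bc 0) / (e.1 1 - c)) hCrne'
      rw [Set.Finite.mem_toFinset] at hesT
      obtain ⟨hesM, hesX⟩ := hesT
      have hmax : ∀ e ∈ Mr, SegCross r₀ bc e.1 e.2 →
          (e.1 0 - bc 0) / (e.1 1 - c) ≤ (es.1 0 - bc 0) / (es.1 1 - c) := by
        intro e he hc
        exact hmaxT e (by rw [Set.Finite.mem_toFinset]; exact ⟨he, hc⟩)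
      -- workhorse facts
      have hHs : c < es.1 1 := hHe es hesM
      have hHslt : es.1 1 < r₀ 1 := hHeHs es hesM
      have hesPS := hePS es hesM
      have hbsB0 : es.2 ∈ B := (hPm es hesM).2
      have hbs10 : es.2 1 = c := hblue es.2 hbsB0
      have hbsPS : es.2 ∈ (↑R ∪ ↑B : Set Pt) := hbPS es.2 hbsB0
      have hbslt0 : es.2 0 < bc 0 := h4 es hesM hesX
      -- W1 : crossing edges have their red strictly right of the special line
      have hW1 : ∀ e ∈ Mr, SegCross r₀ bc e.1 e.2 →
          xv c (bc 0) r₀ (e.1 1 - c) < e.1 0 := by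
        intro e he hc
        have h1 : e.2 0 < bc 0 := h4 e he hc
        have hmin : min (e.1 1 - c) (r₀ 1 - c) = e.1 1 - c :=
          min_eq_left (by linarith [hHeHs e he])
        have hD := hDm e.1 e.2 r₀ bc (hePS e he).1 (hePS e he).2 hr₀PS hbcPS (hHe e he)
          hr₀1 (hb1 e he) hbc1 (hne0 e he).1
        have hco := cross_order (hHe e he) hr₀1 (hb1 e he) hbc1 h1 hD (segCross_symm hc)
        rw [hmin, xv_top c (e.2 0) e.1 (hHe e he)] at hco
        exact hco
      -- W2 : idle edges have their red strictly left of the special line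
      have hW2 : ∀ e ∈ Mr, ¬ SegCross r₀ bc e.1 e.2 → e.2 0 < bc 0 →
          e.1 0 < xv c (bc 0) r₀ (e.1 1 - c) := by
        intro e he hnc h1
        have hmin : min (e.1 1 - c) (r₀ 1 - c) = e.1 1 - c :=
          min_eq_left (by linarith [hHeHs e he])
        have hD := hDm e.1 e.2 r₀ bc (hePS e he).1 (hePS e he).2 hr₀PS hbcPS (hHe e he)
          hr₀1 (hb1 e he) hbc1 (hne0 e he).1
        have hco := not_cross_order (hHe e he) hr₀1 (hb1 e he) hbc1 (hne0 e he).1 h1 hD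
          (fun h => hnc (segCross_symm h))
        rw [hmin, xv_top c (e.2 0) e.1 (hHe e he)] at hco
        exact hco
      -- W3 : ghost edges have their red strictly right of the special line
      have hW3 : ∀ f ∈ Mr, bc 0 < f.2 0 →
          xv c (bc 0) r₀ (f.1 1 - c) < f.1 0 := by
        intro f hf h1
        have hnc : ¬ SegCross r₀ bc f.1 f.2 := fun hc => absurd (h4 f hf hc) (by linarith)
        have hmin : min (r₀ 1 - c) (f.1 1 - c) = f.1 1 - c :=
          min_eq_right (by linarith [hHeHs f hf])
        have hD := hDm r₀ bc f.1 f.2 hr₀PS hbcPS (hePS f hf).1 (hePS f hf).2 hr₀1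
          (hHe f hf) hbc1 (hb1 f hf) (fun h => (hne0 f hf).1 h.symm)
        have hco := not_cross_order hr₀1 (hHe f hf) hbc1 (hb1 f hf)
          (fun h => (hne0 f hf).1 h.symm) h1 hD hnc
        rw [hmin, xv_top c (f.2 0) f.1 (hHe f hf)] at hco
        exact hco
      -- W4 : idle edges lie strictly left of the special line, at every height
      have hW4 : ∀ e ∈ Mr, ¬ SegCross r₀ bc e.1 e.2 → e.2 0 < bc 0 →
          ∀ y, 0 ≤ y → y ≤ e.1 1 - c → xv c (e.2 0) e.1 y < xv c (bc 0) r₀ y := by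
        intro e he hnc h1 y hy0 hy1
        refine xv_between_lt (y₁ := 0) (y₂ := e.1 1 - c) ?_ ?_ hy0 hy1
        · rw [xv_zero, xv_zero]; exact h1
        · rw [xv_top c (e.2 0) e.1 (hHe e he)]; exact hW2 e he hnc h1
      -- W5 : ghost edges lie strictly right of the special line, at every height
      have hW5 : ∀ f ∈ Mr, bc 0 < f.2 0 →
          ∀ y, 0 ≤ y → y ≤ f.1 1 - c → xv c (bc 0) r₀ y < xv c (f.2 0) f.1 y := by
        intro f hf h1 y hy0 hy1
        refine xv_between_lt (y₁ := 0) (y₂ := f.1 1 - c) ?_ ?_ hy0 hy1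
        · rw [xv_zero, xv_zero]; exact h1
        · rw [xv_top c (f.2 0) f.1 (hHe f hf)]; exact hW3 f hf h1
      -- W6 : two noncrossing edges of the rest keep their base order at all common heights
      have hW6 : ∀ e ∈ Mr, ∀ f ∈ Mr, e ≠ f → e.2 0 < f.2 0 →
          ∀ y, 0 ≤ y → y ≤ min (e.1 1 - c) (f.1 1 - c) →
          xv c (e.2 0) e.1 y < xv c (f.2 0) f.1 y := by
        intro e he f hf hef h1 y hy0 hy1
        have hD := hDm e.1 e.2 f.1 f.2 (hePS e he).1 (hePS e he).2 (hePS f hf).1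
          (hePS f hf).2 (hHe e he) (hHe f hf) (hb1 e he) (hb1 f hf) (hinj e he f hf hef).1
        have hmin := not_cross_order (hHe e he) (hHe f hf) (hb1 e he) (hb1 f hf)
          (hinj e he f hf hef).1 h1 hD (hpl e he f hf)
        refine xv_between_lt (y₁ := 0) (y₂ := min (e.1 1 - c) (f.1 1 - c)) ?_ hmin hy0 hy1
        rw [xv_zero, xv_zero]; exact h1
      -- W7 : safety segments keep left of ghosts at all common heights
      have hW7 : ∀ e ∈ Mr, SegCross r₀ bc e.1 e.2 → ∀ f ∈ Mr, bc 0 < f.2 0 →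
          ∀ y, 0 ≤ y → y ≤ min (e.1 1 - c) (f.1 1 - c) →
          xv c (bc 0) e.1 y < xv c (f.2 0) f.1 y := by
        intro e he hc f hf h1 y hy0 hy1
        have hef : e ≠ f := by
          intro h; subst h; exact absurd (h4 e he hc) (by linarith)
        have hD := hDm e.1 bc f.1 f.2 (hePS e he).1 hbcPS (hePS f hf).1
          (hePS f hf).2 (hHe e he) (hHe f hf) hbc1 (hb1 f hf) (hinj e he f hf hef).1
        have hmin := not_cross_order (hHe e he) (hHe f hf) hbc1 (hb1 f hf)
          (hinj e he f hf hef).1 h1 hD (h5 f hf h1 e he hc)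
        refine xv_between_lt (y₁ := 0) (y₂ := min (e.1 1 - c) (f.1 1 - c)) ?_ hmin hy0 hy1
        rw [xv_zero, xv_zero]; exact h1
      -- W8 : the chosen edge is extreme among crossing edges, seen from bc
      have hW8 : ∀ e ∈ Mr, SegCross r₀ bc e.1 e.2 → e ≠ es →
          ∀ y, 0 < y → xv c (bc 0) e.1 y < xv c (bc 0) es.1 y := by
        intro e he hc hnees y hy
        have hne1 : e.1 ≠ es.1 := (hinj e he es hesM hnees).1
        have hH1 : (0:ℝ) < e.1 1 - c := by linarith [hHe e he]
        have hH2 : (0:ℝ) < es.1 1 - c := by linarith [hHs]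
        have hlt : (e.1 0 - bc 0) / (e.1 1 - c) < (es.1 0 - bc 0) / (es.1 1 - c) := by
          rcases lt_or_eq_of_le (hmax e he hc) with h | h
          · exact h
          · exfalso
            apply noX bc e.1 es.1 hbcPS (hePS e he).1 hesPS.1 hbc1 (hHe e he) hHs hne1
            rw [xv, h]
            field_simp
            ring
        simp only [xv]
        nlinarith
      -- the special line strictly left of the chosen edge's line through bc, above 0
      have hW9 : ∀ y, 0 < y → xv c (bc 0) r₀ y < xv c (bc 0) es.1 y := by
        intro y hy
        have h1 : xv c (bc 0) r₀ (es.1 1 - c) < xv c (bc 0) es.1 (es.1 1 - c) := by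
          rw [xv_top c (bc 0) es.1 hHs]
          exact hW1 es hesM hesX
        exact xv_same_base_lt (by linarith [hHs]) hy h1
      -- new rest matching
      set Mr' : Set (Pt × Pt) := insert (es.1, bc) (Mr \ {es}) with hMr'def
      have hbsB : es.2 ∈ B := (hPm es hesM).2
      have hbs1 : es.2 1 = c := hblue es.2 hbsB
      have hbslt : es.2 0 < bc 0 := h4 es hesM hesX
      have hPm' : ∀ e ∈ Mr', e.1 ∈ R ∧ e.2 ∈ B := by
        intro e he
        rcases Set.mem_insert_iff.1 he with he | he
        · subst he; exact ⟨(hPm es hesM).1, hbcB⟩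
        · exact hPm e he.1
      have hinj' : ∀ e ∈ Mr', ∀ f ∈ Mr', e ≠ f → e.1 ≠ f.1 ∧ e.2 ≠ f.2 := by
        intro e he f hf hef
        rcases Set.mem_insert_iff.1 he with he | he <;> rcases Set.mem_insert_iff.1 hf with hf | hf
        · exact absurd (he.trans hf.symm) hef
        · subst he
          exact ⟨(hinj es hesM f hf.1 (Ne.symm hf.2)).1, fun h => (hne0 f hf.1).2 h.symm⟩
        · subst hf
          exact ⟨(hinj e he.1 es hesM he.2).1, (hne0 e he.1).2⟩
        · exact hinj e he.1 f hf.1 hef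
      have hne0' : ∀ e ∈ Mr', e.1 ≠ r₀ ∧ e.2 ≠ es.2 := by
        intro e he
        rcases Set.mem_insert_iff.1 he with he | he
        · subst he
          exact ⟨(hne0 es hesM).1, fun h => (hne0 es hesM).2 h.symm⟩
        · exact ⟨(hne0 e he.1).1, (hinj e he.1 es hesM he.2).2⟩
      have hfin' : Mr'.Finite := (hfin.subset Set.diff_subset).insert _
      have hgkey : ∀ f ∈ Mr, f ≠ es → ¬ SegCross es.1 bc f.1 f.2 := by
        intro f hf hfes hX
        have hf1ne : f.1 ≠ es.1 := (hinj f hf es hesM hfes).1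
        have hD := hDm f.1 f.2 es.1 bc (hePS f hf).1 (hePS f hf).2 hesPS.1 hbcPS
          (hHe f hf) hHs (hb1 f hf) hbc1 hf1ne
        by_cases hgf : bc 0 < f.2 0
        · exact h5 f hf hgf es hesM hesX hX
        · have hflt : f.2 0 < bc 0 :=
            lt_of_le_of_ne (not_lt.1 hgf) (hblx f.2 bc (hPm f hf).2 hbcB (hne0 f hf).2)
          have hm0 : (0:ℝ) < min (f.1 1 - c) (es.1 1 - c) :=
            lt_min (by linarith [hHe f hf]) (by linarith [hHs])
          have hco := cross_order (hHe f hf) hHs (hb1 f hf) hbc1 hflt hD (segCross_symm hX)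
          by_cases hcf : SegCross r₀ bc f.1 f.2
          · have h1 : xv c (f.2 0) f.1 (min (f.1 1 - c) (es.1 1 - c)) ≤
                xv c (bc 0) f.1 (min (f.1 1 - c) (es.1 1 - c)) :=
              xv_same_red_le (hHe f hf) (le_of_lt hflt) (le_of_lt hm0) (min_le_left _ _)
            have h2 := hW8 f hf hcf hfes (min (f.1 1 - c) (es.1 1 - c)) hm0
            linarith
          · have h1 := hW4 f hf hcf hflt (min (f.1 1 - c) (es.1 1 - c))
              (le_of_lt hm0) (min_le_left _ _)
            have h2 := hW9 (min (f.1 1 - c) (es.1 1 - c)) hm0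
            linarith
      have hplane' : BiPlane Mr' := by
        intro e he f hf
        rcases Set.mem_insert_iff.1 he with he | he <;> rcases Set.mem_insert_iff.1 hf with hf | hf
        · subst he; subst hf; exact not_segCross_self rfl
        · subst he; exact hgkey f hf.1 hf.2
        · subst hf; intro h; exact hgkey e he.1 he.2 (segCross_symm h)
        · exact hpl e he.1 f hf.1
      have hgno : ¬ SegCross r₀ es.2 es.1 bc := by
        intro hc
        have hD := hDm r₀ es.2 es.1 bc hr₀PS hbsPS hesPS.1 hbcPS hr₀1 hHs hbs10 hbc1
          (fun h => (hne0 es hesM).1 h.symm)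
        have hmin : min (r₀ 1 - c) (es.1 1 - c) = es.1 1 - c := min_eq_right (by linarith)
        have hco := cross_order hr₀1 hHs hbs10 hbc1 hbslt0 hD hc
        rw [hmin, xv_top c (bc 0) es.1 hHs] at hco
        have h1 : xv c (es.2 0) r₀ (es.1 1 - c) < xv c (bc 0) r₀ (es.1 1 - c) :=
          xv_same_red_lt hr₀1 hbslt0 (by linarith) (by linarith)
        have h2 := hW1 es hesM hesX
        linarith
      have hS'S : ∀ y, 0 < y → y < r₀ 1 - c → xv c (es.2 0) r₀ y < xv c (bc 0) r₀ y :=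
        fun y hy0 hy1 => xv_same_red_lt hr₀1 hbslt0 (le_of_lt hy0) hy1
      have h4' : ∀ e ∈ Mr', SegCross r₀ es.2 e.1 e.2 → e.2 0 < es.2 0 := by
        intro e he hc
        rcases Set.mem_insert_iff.1 he with he | he
        · subst he; exact absurd hc hgno
        · obtain ⟨heM, hees'⟩ := he
          have hnees : e ≠ es := fun h => hees' h
          by_contra hcon
          push_neg at hcon
          have hnees2 : e.2 ≠ es.2 := (hinj e heM es hesM hnees).2
          have hgt : es.2 0 < e.2 0 :=
            lt_of_le_of_ne hcon (hblx es.2 e.2 hbsB0 (hPm e heM).2 (Ne.symm hnees2))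
          have hD := hDm r₀ es.2 e.1 e.2 hr₀PS hbsPS (hePS e heM).1 (hePS e heM).2 hr₀1
            (hHe e heM) hbs10 (hb1 e heM) (fun h => (hne0 e heM).1 h.symm)
          have hmin : min (r₀ 1 - c) (e.1 1 - c) = e.1 1 - c :=
            min_eq_right (by linarith [hHeHs e heM])
          have hco := cross_order hr₀1 (hHe e heM) hbs10 (hb1 e heM) hgt hD hc
          rw [hmin, xv_top c (e.2 0) e.1 (hHe e heM)] at hco
          by_cases hge : bc 0 < e.2 0
          · have h1 := hW3 e heM hge
            have h2 := hS'S (e.1 1 - c) (by linarith [hHe e heM]) (by linarith [hHeHs e heM])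
            linarith
          · have helt : e.2 0 < bc 0 :=
              lt_of_le_of_ne (not_lt.1 hge) (hblx e.2 bc (hPm e heM).2 hbcB (hne0 e heM).2)
            by_cases hcr : SegCross r₀ bc e.1 e.2
            · have h1 := hW1 e heM hcr
              have h2 := hS'S (e.1 1 - c) (by linarith [hHe e heM]) (by linarith [hHeHs e heM])
              linarith
            · rcases le_or_gt (e.1 1 - c) (es.1 1 - c) with hle | hlt2
              · have h6 := hW6 es hesM e heM (Ne.symm hnees) hgt (e.1 1 - c)
                  (by linarith [hHe e heM]) (le_min hle (le_refl _))
                rw [xv_top c (e.2 0) e.1 (hHe e heM)] at h6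
                have h7 : xv c (es.2 0) r₀ (es.1 1 - c) < xv c (es.2 0) es.1 (es.1 1 - c) := by
                  rw [xv_top c (es.2 0) es.1 hHs]
                  have h8 := hW1 es hesM hesX
                  have h9 := hS'S (es.1 1 - c) (by linarith) (by linarith)
                  linarith
                have h10 : xv c (es.2 0) r₀ (e.1 1 - c) < xv c (es.2 0) es.1 (e.1 1 - c) :=
                  xv_same_base_lt (by linarith) (by linarith [hHe e heM]) h7
                linarith
              · have h6 := hW6 es hesM e heM (Ne.symm hnees) hgt (es.1 1 - c)
                  (by linarith) (le_min (le_refl _) (le_of_lt hlt2))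
                rw [xv_top c (es.2 0) es.1 hHs] at h6
                have h7 := hW1 es hesM hesX
                have h8 := hW4 e heM hcr helt (es.1 1 - c) (by linarith) (le_of_lt hlt2)
                linarith
      have hkey : ∀ e' ∈ Mr, e' ≠ es → SegCross r₀ es.2 e'.1 e'.2 → ∀ y, 0 < y →
          xv c (es.2 0) e'.1 y < xv c (es.2 0) es.1 y := by
        intro e' he'M hnees hc'
        have he'Mr' : e' ∈ Mr' := Set.mem_insert_iff.2 (Or.inr ⟨he'M, fun h => hnees h⟩)
        have hblt' : e'.2 0 < es.2 0 := h4' e' he'Mr' hc'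
        have hne1 : e'.1 ≠ es.1 := (hinj e' he'M es hesM hnees).1
        have hH1 : (0:ℝ) < e'.1 1 - c := by linarith [hHe e' he'M]
        have hH2 : (0:ℝ) < es.1 1 - c := by linarith [hHs]
        by_contra hcon
        push_neg at hcon
        obtain ⟨y₀, hy₀, hge⟩ := hcon
        have hstar : ∀ y, 0 < y → xv c (es.2 0) es.1 y < xv c (es.2 0) e'.1 y := by
          have hlt : xv c (es.2 0) es.1 y₀ < xv c (es.2 0) e'.1 y₀ := by
            rcases lt_or_eq_of_le hge with h | h
            · exact h
            · exfalso
              apply noX es.2 e'.1 es.1 hbsPS (hePS e' he'M).1 hesPS.1 hbs10 (hHe e' he'M)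
                hHs hne1
              have hsl : (es.1 0 - es.2 0) / (es.1 1 - c) = (e'.1 0 - es.2 0) / (e'.1 1 - c) := by
                simp only [xv] at h
                have h2 : y₀ * ((es.1 0 - es.2 0) / (es.1 1 - c)) =
                    y₀ * ((e'.1 0 - es.2 0) / (e'.1 1 - c)) := by linarith
                exact mul_left_cancel₀ (ne_of_gt hy₀) h2
              rw [xv, ← hsl]
              field_simp
              ring
          intro y hy
          exact xv_same_base_lt hy₀ hy hlt
        rcases le_or_gt (e'.1 1 - c) (es.1 1 - c) with hle | hlt2
        · have h6 := hW6 e' he'M es hesM hnees (by linarith) (e'.1 1 - c)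
            (le_of_lt hH1) (le_min (le_refl _) hle)
          rw [xv_top c (e'.2 0) e'.1 (hHe e' he'M)] at h6
          have h7 := hstar (e'.1 1 - c) hH1
          rw [xv_top c (es.2 0) e'.1 (hHe e' he'M)] at h7
          linarith
        · by_cases hcr : SegCross r₀ bc e'.1 e'.2
          · have hmaxle := hmax e' he'M hcr
            have hs := hstar 1 one_pos
            simp only [xv] at hs
            have hs2 : (es.1 0 - es.2 0) / (es.1 1 - c) < (e'.1 0 - es.2 0) / (e'.1 1 - c) := by
              linarith
            rw [div_lt_div_iff₀ hH2 hH1] at hs2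
            rw [div_le_div_iff₀ hH1 hH2] at hmaxle
            nlinarith [hbslt0, hlt2]
          · have helt' : e'.2 0 < bc 0 := by linarith
            have hbey : xv c (bc 0) r₀ (e'.1 1 - c) < xv c (es.2 0) es.1 (e'.1 1 - c) := by
              refine xv_beyond_lt (y₁ := 0) (y₂ := es.1 1 - c) ?_ ?_ hH2 (le_of_lt hlt2)
              · rw [xv_zero, xv_zero]; exact hbslt0
              · rw [xv_top c (es.2 0) es.1 hHs]; exact hW1 es hesM hesX
            have h9 := hstar (e'.1 1 - c) hH1
            rw [xv_top c (es.2 0) e'.1 (hHe e' he'M)] at h9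
            have h10 := hW2 e' he'M hcr helt'
            linarith
      have h5' : ∀ f ∈ Mr', es.2 0 < f.2 0 → ∀ e ∈ Mr', SegCross r₀ es.2 e.1 e.2 →
          ¬ SegCross e.1 es.2 f.1 f.2 := by
        intro f' hf' hgf' e' he' hc' hXX
        rcases Set.mem_insert_iff.1 he' with he'g | he'o
        · rw [he'g] at hc'; exact hgno hc'
        obtain ⟨he'M, he'ne'⟩ := he'o
        have hnees : e' ≠ es := fun h => he'ne' h
        have hblt' : e'.2 0 < es.2 0 := h4' e' (Set.mem_insert_iff.2 (Or.inr ⟨he'M, he'ne'⟩)) hc'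
        have hH1 : (0:ℝ) < e'.1 1 - c := by linarith [hHe e' he'M]
        have hH2 : (0:ℝ) < es.1 1 - c := by linarith [hHs]
        rcases Set.mem_insert_iff.1 hf' with hf'g | hf'o
        · -- f' is the new edge (es.1, bc)
          rw [hf'g] at hXX
          have hne1 : e'.1 ≠ es.1 := (hinj e' he'M es hesM hnees).1
          have hD := hDm e'.1 es.2 es.1 bc (hePS e' he'M).1 hbsPS hesPS.1 hbcPS
            (hHe e' he'M) hHs hbs10 hbc1 hne1
          have hco := cross_order (hHe e' he'M) hHs hbs10 hbc1 hbslt0 hD hXX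
          rcases le_total (e'.1 1 - c) (es.1 1 - c) with hle | hle
          · have hmin : min (e'.1 1 - c) (es.1 1 - c) = e'.1 1 - c := min_eq_left hle
            rw [hmin] at hco
            have hnc := hgkey e' he'M hnees
            have hD2 := hDm e'.1 e'.2 es.1 bc (hePS e' he'M).1 (hePS e' he'M).2 hesPS.1
              hbcPS (hHe e' he'M) hHs (hb1 e' he'M) hbc1 hne1
            have hord := not_cross_order (hHe e' he'M) hHs (hb1 e' he'M) hbc1 hne1
              (by linarith) hD2 (fun h => hnc (segCross_symm h))
            rw [hmin] at hord
            rw [xv_top c (e'.2 0) e'.1 (hHe e' he'M)] at hord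
            have h7 : xv c (es.2 0) e'.1 (e'.1 1 - c) = e'.1 0 :=
              xv_top c (es.2 0) e'.1 (hHe e' he'M)
            linarith
          · have hmin : min (e'.1 1 - c) (es.1 1 - c) = es.1 1 - c := min_eq_right hle
            rw [hmin, xv_top c (bc 0) es.1 hHs] at hco
            have hk := hkey e' he'M hnees hc' (es.1 1 - c) hH2
            rw [xv_top c (es.2 0) es.1 hHs] at hk
            linarith
        · -- f' is an old edge
          obtain ⟨hf'M, hf'ne'⟩ := hf'o
          have hnf'es : f' ≠ es := fun h => hf'ne' h
          have hHf : (0:ℝ) < f'.1 1 - c := by linarith [hHe f' hf'M]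
          have hnef' : e' ≠ f' := by
            intro h; rw [h] at hblt'; linarith
          have hne1f : e'.1 ≠ f'.1 := (hinj e' he'M f' hf'M hnef').1
          have hD := hDm e'.1 es.2 f'.1 f'.2 (hePS e' he'M).1 hbsPS (hePS f' hf'M).1
            (hePS f' hf'M).2 (hHe e' he'M) (hHe f' hf'M) hbs10 (hb1 f' hf'M) hne1f
          have hco := cross_order (hHe e' he'M) (hHe f' hf'M) hbs10 (hb1 f' hf'M) hgf' hD hXX
          by_cases hgg : bc 0 < f'.2 0
          · -- old ghost
            have hm0 : (0:ℝ) < min (e'.1 1 - c) (f'.1 1 - c) := lt_min hH1 hHf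
            by_cases hcr : SegCross r₀ bc e'.1 e'.2
            · have h7 := hW7 e' he'M hcr f' hf'M hgg (min (e'.1 1 - c) (f'.1 1 - c))
                (le_of_lt hm0) (le_refl _)
              have h8 : xv c (es.2 0) e'.1 (min (e'.1 1 - c) (f'.1 1 - c)) ≤
                  xv c (bc 0) e'.1 (min (e'.1 1 - c) (f'.1 1 - c)) :=
                xv_same_red_le (hHe e' he'M) (le_of_lt hbslt0) (le_of_lt hm0) (min_le_left _ _)
              linarith
            · have helt' : e'.2 0 < bc 0 := by linarith
              have hA : xv c (es.2 0) e'.1 (min (e'.1 1 - c) (f'.1 1 - c)) <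
                  xv c (bc 0) r₀ (min (e'.1 1 - c) (f'.1 1 - c)) := by
                refine xv_between_lt (y₁ := 0) (y₂ := e'.1 1 - c) ?_ ?_ (le_of_lt hm0)
                  (min_le_left _ _)
                · rw [xv_zero, xv_zero]; linarith
                · rw [xv_top c (es.2 0) e'.1 (hHe e' he'M)]; exact hW2 e' he'M hcr helt'
              have hS := hW5 f' hf'M hgg (min (e'.1 1 - c) (f'.1 1 - c))
                (le_of_lt hm0) (min_le_right _ _)
              linarith
          · -- demoted
            have hfor : f'.2 0 < bc 0 :=
              lt_of_le_of_ne (not_lt.1 hgg) (hblx f'.2 bc (hPm f' hf'M).2 hbcB (hne0 f' hf'M).2)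
            rcases le_total (e'.1 1 - c) (f'.1 1 - c) with hle | hle
            · -- C1
              have hmin : min (e'.1 1 - c) (f'.1 1 - c) = e'.1 1 - c := min_eq_left hle
              rw [hmin, xv_top c (es.2 0) e'.1 (hHe e' he'M)] at hco
              have h6 := hW6 e' he'M f' hf'M hnef' (by linarith) (e'.1 1 - c)
                (le_of_lt hH1) (le_min (le_refl _) hle)
              rw [xv_top c (e'.2 0) e'.1 (hHe e' he'M)] at h6
              linarith
            · -- C2
              have hmin : min (e'.1 1 - c) (f'.1 1 - c) = f'.1 1 - c := min_eq_right hle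
              rw [hmin, xv_top c (f'.2 0) f'.1 (hHe f' hf'M)] at hco
              have hk := hkey e' he'M hnees hc' (f'.1 1 - c) hHf
              rcases le_or_gt (f'.1 1 - c) (es.1 1 - c) with hle2 | hlt2
              · -- C2a
                have hwall := hW6 es hesM f' hf'M (Ne.symm hnf'es) hgf' (f'.1 1 - c)
                  (le_of_lt hHf) (le_min hle2 (le_refl _))
                rw [xv_top c (f'.2 0) f'.1 (hHe f' hf'M)] at hwall
                linarith
              · -- C2b : the shield
                have hwall := hW6 es hesM f' hf'M (Ne.symm hnf'es) hgf' (es.1 1 - c)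
                  (le_of_lt hH2) (le_min (le_refl _) (le_of_lt hlt2))
                have htop2 : xv c (f'.2 0) f'.1 (f'.1 1 - c) = f'.1 0 :=
                  xv_top c (f'.2 0) f'.1 (hHe f' hf'M)
                obtain ⟨q, hq1, hq2, hqeq⟩ := xv_root (c := c) (β := f'.2 0) (r := f'.1)
                  (β' := es.2 0) (r' := es.1) (y₁ := es.1 1 - c) (y₂ := f'.1 1 - c)
                  hwall (by rw [htop2]; linarith) hlt2
                have hRi : xv c (f'.2 0) f'.1 q < xv c (bc 0) e'.1 q := by
                  refine xv_between_lt (y₁ := 0) (y₂ := f'.1 1 - c) ?_ ?_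
                    (by linarith) (le_of_lt hq2)
                  · rw [xv_zero, xv_zero]; exact hfor
                  · rw [htop2]
                    have hAR : xv c (es.2 0) e'.1 (f'.1 1 - c) ≤
                        xv c (bc 0) e'.1 (f'.1 1 - c) :=
                      xv_same_red_le (hHe e' he'M) (le_of_lt hbslt0) (le_of_lt hHf) hle
                    linarith
                have hRii : xv c (bc 0) e'.1 q < xv c (es.2 0) es.1 q := by
                  refine xv_beyond_lt (y₁ := 0) (y₂ := es.1 1 - c) ?_ ?_ hH2 (le_of_lt hq1)
                  · rw [xv_zero, xv_zero]; exact hbslt0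
                  · rw [xv_top c (es.2 0) es.1 hHs]
                    by_cases hcr : SegCross r₀ bc e'.1 e'.2
                    · have h8 := hW8 e' he'M hcr hnees (es.1 1 - c) hH2
                      rw [xv_top c (bc 0) es.1 hHs] at h8
                      exact h8
                    · have helt' : e'.2 0 < bc 0 := by linarith
                      have hv : xv c (bc 0) e'.1 (e'.1 1 - c) < xv c (bc 0) r₀ (e'.1 1 - c) := by
                        rw [xv_top c (bc 0) e'.1 (hHe e' he'M)]
                        exact hW2 e' he'M hcr helt'
                      have hRS := xv_same_base_lt hH1 hH2 hv
                      have hSs := hW1 es hesM hesX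
                      linarith
                linarith
      have hcard' : (B.filter (fun b => b 0 < es.2 0)).card ≤ N := by
        have hsub : B.filter (fun b => b 0 < es.2 0) ⊆ (B.filter (fun b => b 0 < bc 0)).erase es.2 := by
          intro b hb
          rw [Finset.mem_filter] at hb
          rw [Finset.mem_erase, Finset.mem_filter]
          refine ⟨?_, hb.1, by linarith [hb.2]⟩
          intro h; subst h; exact lt_irrefl _ hb.2
        have hmem : es.2 ∈ B.filter (fun b => b 0 < bc 0) := by
          rw [Finset.mem_filter]; exact ⟨hbsB, hbslt⟩
        have hle := Finset.card_le_card hsub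
        rw [Finset.card_erase_of_mem hmem] at hle
        calc (B.filter (fun b => b 0 < es.2 0)).card
            ≤ (B.filter (fun b => b 0 < bc 0)).card - 1 := hle
          _ ≤ (N + 1) - 1 := Nat.sub_le_sub_right hcard 1
          _ = N := rfl
      have hstep := ih es.2 Mr' hbsB hcard' hPm' hinj' hne0' hfin' hplane' h4' h5'
      have hflip : BiFlip (insert (r₀, bc) Mr) (insert (r₀, es.2) Mr') := by
        refine ⟨r₀, bc, es.1, es.2, Set.mem_insert _ _, Set.mem_insert_iff.2 (Or.inr hesM), hesX, ?_⟩
        rw [hMr'def]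
        ext x
        simp only [Set.mem_insert_iff, Set.mem_union, Set.mem_diff, Set.mem_singleton_iff,
          Set.mem_insert_iff]
        constructor
        · rintro (rfl | (rfl | ⟨hx, hxe⟩))
          · right; left; rfl
          · right; right; rfl
          · left
            constructor
            · right; exact hx
            · intro h
              rcases h with h | h
              · subst h; exact (hne0 _ hx).1 rfl
              · exact hxe h
        · rintro (⟨hx | hx, hne2⟩ | (rfl | rfl))
          · exfalso; exact hne2 (Or.inl hx)
          · right; right
            refine ⟨hx, ?_⟩
            intro h
            exact hne2 (Or.inr h)
          · left; rfl
          · right; left; rfl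
      exact bftp_step hflip hstep
    · push_neg at hex
      exact bftp_mono (bftp_zero (plane_insert hpl hex)) (Nat.zero_le _)

end S17

namespace S17
theorem stmt17_aux (n : ℕ) (hn : Even n) (R B : Finset Pt)
    (hR : R.card = n / 2) (hB : B.card = n / 2)
    (c : ℝ)
    (hblue : ∀ b ∈ B, b 1 = c)
    (hred : ∀ r ∈ R, r 1 > c)
    (hcol : ∀ p ∈ ↑R ∪ (↑B : Set Pt), ∀ q ∈ ↑R ∪ (↑B : Set Pt),
      ∀ x ∈ ↑R ∪ (↑B : Set Pt), p ≠ q → p ≠ x → q ≠ x →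
        Collinear ℝ ({p, q, x} : Set Pt) → (p 1 = c ∧ q 1 = c ∧ x 1 = c))
    (M : Set (Pt × Pt)) (hM : IsBiPM R B M)
    (b₀ r₀ : Pt)
    (hb₀ : b₀ ∈ B) (hb₀right : ∀ b ∈ B, b ≠ b₀ → b 0 < b₀ 0)
    (hr₀ : r₀ ∈ R) (hr₀top : ∀ r ∈ R, r ≠ r₀ → r 1 < r₀ 1)
    (hmatch : (r₀, b₀) ∈ M)
    (hplane : BiPlane (M \ {(r₀, b₀)})) :
    BiFlipsToPlane M (n / 2 - 1) := by
  classical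
  obtain ⟨hM1, hM2, hM3⟩ := hM
  have hredinj : ∀ e ∈ M, ∀ f ∈ M, e.1 = f.1 → e = f := by
    intro e he f hf h
    obtain ⟨u, hu, huq⟩ := hM2 e.1 (hM1 e he).1
    rw [huq e ⟨he, rfl⟩, huq f ⟨hf, h.symm⟩]
  have hbluinj : ∀ e ∈ M, ∀ f ∈ M, e.2 = f.2 → e = f := by
    intro e he f hf h
    obtain ⟨u, hu, huq⟩ := hM3 e.2 (hM1 e he).2
    rw [huq e ⟨he, rfl⟩, huq f ⟨hf, h.symm⟩]
  set Mr : Set (Pt × Pt) := M \ {(r₀, b₀)} with hMr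
  have hMrM : Mr ⊆ M := Set.diff_subset
  have hPm : ∀ e ∈ Mr, e.1 ∈ R ∧ e.2 ∈ B := fun e he => hM1 e (hMrM he)
  have hinj : ∀ e ∈ Mr, ∀ f ∈ Mr, e ≠ f → e.1 ≠ f.1 ∧ e.2 ≠ f.2 := by
    intro e he f hf hef
    constructor
    · intro h; exact hef (hredinj e (hMrM he) f (hMrM hf) h)
    · intro h; exact hef (hbluinj e (hMrM he) f (hMrM hf) h)
  have hne0 : ∀ e ∈ Mr, e.1 ≠ r₀ ∧ e.2 ≠ b₀ := by
    intro e he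
    constructor
    · intro h
      exact he.2 (hredinj e (hMrM he) (r₀, b₀) hmatch h)
    · intro h
      exact he.2 (hbluinj e (hMrM he) (r₀, b₀) hmatch h)
  have hfinM : M.Finite := by
    apply Set.Finite.subset (Set.Finite.prod R.finite_toSet B.finite_toSet)
    intro e he
    exact Set.mem_prod.2 ⟨(hM1 e he).1, (hM1 e he).2⟩
  have hfin : Mr.Finite := hfinM.subset hMrM
  have h4 : ∀ e ∈ Mr, SegCross r₀ b₀ e.1 e.2 → e.2 0 < b₀ 0 :=
    fun e he _ => hb₀right e.2 (hPm e he).2 (hne0 e he).2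
  have h5 : ∀ f ∈ Mr, b₀ 0 < f.2 0 → ∀ e ∈ Mr, SegCross r₀ b₀ e.1 e.2 →
      ¬ SegCross e.1 b₀ f.1 f.2 := by
    intro f hf hgf
    exfalso
    rcases eq_or_ne f.2 b₀ with h | h
    · rw [h] at hgf; exact lt_irrefl _ hgf
    · exact absurd (hb₀right f.2 (hPm f hf).2 h) (by linarith)
  have hins : insert (r₀, b₀) Mr = M := by
    rw [hMr, Set.insert_diff_singleton]
    exact Set.insert_eq_self.mpr hmatch
  have hcard : (B.filter (fun b => b 0 < b₀ 0)).card ≤ n / 2 - 1 := by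
    have hsub : B.filter (fun b => b 0 < b₀ 0) ⊆ B.erase b₀ := by
      intro b hb
      rw [Finset.mem_filter] at hb
      rw [Finset.mem_erase]
      exact ⟨fun h => by rw [h] at hb; exact lt_irrefl _ hb.2, hb.1⟩
    have := Finset.card_le_card hsub
    rw [Finset.card_erase_of_mem hb₀, hB] at this
    exact this
  have := master c R B hblue hred hcol r₀ hr₀ hr₀top
    ((B.filter (fun b => b 0 < b₀ 0)).card) b₀ Mr hb₀ (le_refl _)
    hPm hinj hne0 hfin hplane h4 h5
  rw [hins] at this
  exact bftp_mono this hcard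

end S17


/-- Let `P = R ∪ B` consist of `n/2` blue points on a horizontal line
`y = c` and `n/2` red points strictly above it, with no three points collinear except
blue points on the line. If, in the perfect bichromatic matching `M`, the rightmost blue
point is matched to the (unique) topmost red point and removing that edge leaves a plane
matching, then `M` can be made plane by at most `n/2 - 1` flips. -/
theorem stmt17 (n : ℕ) (hn : Even n) (R B : Finset Pt)
    (hR : R.card = n / 2) (hB : B.card = n / 2)
    (c : ℝ)
    (hblue : ∀ b ∈ B, b 1 = c)
    (hred : ∀ r ∈ R, r 1 > c)
    (hcol : ∀ p ∈ ↑R ∪ (↑B : Set Pt), ∀ q ∈ ↑R ∪ (↑B : Set Pt),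
      ∀ x ∈ ↑R ∪ (↑B : Set Pt), p ≠ q → p ≠ x → q ≠ x →
        Collinear ℝ ({p, q, x} : Set Pt) → (p 1 = c ∧ q 1 = c ∧ x 1 = c))
    (M : Set (Pt × Pt)) (hM : IsBiPM R B M)
    (b₀ r₀ : Pt)
    (hb₀ : b₀ ∈ B) (hb₀right : ∀ b ∈ B, b ≠ b₀ → b 0 < b₀ 0)
    (hr₀ : r₀ ∈ R) (hr₀top : ∀ r ∈ R, r ≠ r₀ → r 1 < r₀ 1)
    (hmatch : (r₀, b₀) ∈ M)
    (hplane : BiPlane (M \ {(r₀, b₀)})) :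
    BiFlipsToPlane M (n / 2 - 1) := by
  exact S17.stmt17_aux n hn R B hR hB c hblue hred hcol M hM b₀ r₀ hb₀ hb₀right hr₀ hr₀top hmatch hplane
end
end
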